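/- arXiv:2505.20083 — 6 statements merged into one kernel-verified Lean document; each statement's English description precedes it below -/
import Mathlib

section
/- Let J be a countable subset of (0,∞) and γ : J → (0,∞) be such that S(r) := Σ_{s∈J, s≤r} γ(s) is finite for every r ≥ 0. Then the range {S(r) : r ∈ [0,∞)} of the nondecreasing pure-jump function S has Lebesgue measure zero. -/
/-!
On `[a, R]` the pure-jump function `S` jumps by `γ s` at each `s ∈ J ∩ (a, R]`. The gaps
`(S s - γ s, S s)` it skips are pairwise disjoint, miss the image of `[a, R]` and lie in
`[S a, S R]`, while their total length `∑ γ s = S R - S a` is the length of that interval;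
hence the image is null, and `[0, ∞)` is a countable union of such intervals.
-/

open MeasureTheory Set Function

theorem measure_eq_zero_of_disjoint_of_le_tsum {α ι : Type*} [MeasurableSpace α] {μ : Measure α}
    {A T : Set α} {U : ι → Set α} (hU : ∀ i, MeasurableSet (U i))
    (hUU : Pairwise (Disjoint on U)) (hAU : ∀ i, Disjoint A (U i)) (hAT : A ⊆ T)
    (hUT : ∀ i, U i ⊆ T) (hT : μ T ≤ ∑' i, μ (U i)) (hT_ne_top : μ T ≠ ⊤) : μ A = 0 := by
  have hsum : μ A + ∑' i, μ (U i) ≤ μ T := by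
    rw [ENNReal.tsum_eq_iSup_sum, ENNReal.add_iSup]
    refine iSup_le fun F => ?_
    calc μ A + ∑ i ∈ F, μ (U i) = μ A + μ (⋃ i ∈ F, U i) := by
          rw [measure_biUnion_finset (hUU.set_pairwise _) fun i _ => hU i]
      _ = μ (A ∪ ⋃ i ∈ F, U i) :=
          (measure_union (disjoint_iUnion₂_right.2 fun i _ => hAU i)
            (F.measurableSet_biUnion fun i _ => hU i)).symm
      _ ≤ μ T := measure_mono (union_subset hAT (iUnion₂_subset fun i _ => hUT i))
  exact nonpos_iff_eq_zero.1 <| (ENNReal.cancel_of_ne hT_ne_top).add_le_iff_nonpos_left.1 <|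
    (add_le_add_right hT _).trans hsum

noncomputable def pureJumpFunction (J : Set ℝ) (γ : ℝ → ℝ) (r : ℝ) : ℝ :=
  ∑' s : ↥(J ∩ Iic r), γ s

namespace pureJumpFunction

variable {J : Set ℝ} {γ : ℝ → ℝ} {a r s R : ℝ}

theorem summable_of_le (hR : Summable fun s : ↥(J ∩ Iic R) => γ s) (hr : r ≤ R) :
    Summable fun s : ↥(J ∩ Iic r) => γ s :=
  hR.comp_injective (inclusion_injective (inter_subset_inter_right J (Iic_subset_Iic.2 hr)))

theorem summable_Ioc (hR : Summable fun s : ↥(J ∩ Iic R) => γ s) :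
    Summable fun s : ↥(J ∩ Ioc a R) => γ s :=
  hR.comp_injective (inclusion_injective (inter_subset_inter_right J Ioc_subset_Iic_self))

theorem sub_eq_tsum (hR : Summable fun s : ↥(J ∩ Iic R) => γ s) (ha : a ≤ R) :
    pureJumpFunction J γ R - pureJumpFunction J γ a = ∑' s : ↥(J ∩ Ioc a R), γ s := by
  have hsplit : J ∩ Iic R = J ∩ Iic a ∪ J ∩ Ioc a R := by
    rw [← inter_union_distrib_left, Iic_union_Ioc_eq_Iic ha]
  have hdisj : Disjoint (J ∩ Iic a) (J ∩ Ioc a R) :=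
    (Iic_disjoint_Ioc le_rfl).mono inter_subset_right inter_subset_right
  rw [sub_eq_iff_eq_add', pureJumpFunction, pureJumpFunction, hsplit]
  rw [hsplit] at hR
  exact Summable.tsum_union_disjoint hdisj
    (hR.comp_injective (inclusion_injective subset_union_left))
    (hR.comp_injective (inclusion_injective subset_union_right))

theorem le_of_le (hγ : ∀ s ∈ J, 0 ≤ γ s) (hR : Summable fun s : ↥(J ∩ Iic R) => γ s)
    (ha : a ≤ R) :
    pureJumpFunction J γ a ≤ pureJumpFunction J γ R :=
  sub_nonneg.1 <| sub_eq_tsum hR ha ▸ tsum_nonneg fun s => hγ s s.2.1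

theorem add_le (hγ : ∀ s ∈ J, 0 ≤ γ s) (hR : Summable fun s : ↥(J ∩ Iic R) => γ s)
    (hs : s ∈ J) (hrs : r < s) (hsR : s ≤ R) :
    pureJumpFunction J γ r + γ s ≤ pureJumpFunction J γ R := by
  rw [← le_sub_iff_add_le', sub_eq_tsum hR (hrs.le.trans hsR)]
  exact (summable_Ioc hR).le_tsum ⟨s, hs, hrs, hsR⟩ fun t _ => hγ t t.2.1

theorem volume_image_Icc (hγ : ∀ s ∈ J, 0 ≤ γ s) (hR : Summable fun s : ↥(J ∩ Iic R) => γ s) :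
    volume (pureJumpFunction J γ '' Icc a R) = 0 := by
  rcases lt_or_ge R a with hRa | haR
  · simp [Icc_eq_empty_of_lt hRa]
  set S := pureJumpFunction J γ
  have hmono : ∀ {r r'}, r ≤ r' → r' ≤ R → S r ≤ S r' := fun h h' =>
    le_of_le hγ (summable_of_le hR h') h
  have hjump : ∀ {r s}, s ∈ J → r < s → s ≤ R → S r + γ s ≤ S s := fun hs hrs hsR =>
    add_le hγ (summable_of_le hR hsR) hs hrs le_rfl
  refine measure_eq_zero_of_disjoint_of_le_tsum (T := Icc (S a) (S R))
    (U := fun s : ↥(J ∩ Ioc a R) => Ioo (S s - γ s) (S s)) (fun _ => measurableSet_Ioo)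
    ?_ ?_ ?_ ?_ ?_ (by simp)
  · refine (pairwise_disjoint_on _).2 fun s t hst => disjoint_left.2 ?_
    rintro x ⟨-, hxs⟩ ⟨hxt, -⟩
    linarith [hjump t.2.1 hst t.2.2.2]
  · rintro s
    refine disjoint_left.2 ?_
    rintro _ ⟨r, ⟨-, hrR⟩, rfl⟩ ⟨hsr, hrs⟩
    rcases lt_or_ge r s with h | h
    · linarith [hjump s.2.1 h s.2.2.2]
    · linarith [hmono h hrR]
  · rintro _ ⟨r, ⟨har, hrR⟩, rfl⟩
    exact ⟨hmono har hrR, hmono hrR le_rfl⟩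
  · intro s
    refine Ioo_subset_Icc_self.trans (Icc_subset_Icc ?_ (hmono s.2.2.2 le_rfl))
    linarith [hjump s.2.1 s.2.2.1 s.2.2.2]
  · rw [Real.volume_Icc, sub_eq_tsum hR haR,
      ENNReal.ofReal_tsum_of_nonneg (fun s : ↥(J ∩ Ioc a R) => hγ s s.2.1) (summable_Ioc hR)]
    simp only [Real.volume_Ioo, sub_sub_cancel, le_rfl]

end pureJumpFunction

theorem range_of_pure_jump_function_measure_zero_general
    (J : Set ℝ)
    (γ : ℝ → ℝ) (hγ : ∀ s ∈ J, 0 < γ s)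
    (hfin : ∀ r : ℝ, 0 ≤ r → Summable (fun s : ↥(J ∩ Set.Iic r) => γ (s : ℝ)))
    (S : ℝ → ℝ)
    (hS : ∀ r : ℝ, S r = ∑' s : ↥(J ∩ Set.Iic r), γ (s : ℝ)) :
    volume (S '' Set.Ici (0 : ℝ)) = 0 := by
  have hcover : S '' Ici 0 ⊆ ⋃ n : ℕ, S '' Icc 0 n := by
    rintro _ ⟨r, hr, rfl⟩
    exact mem_iUnion.2 ⟨⌈r⌉₊, r, ⟨hr, Nat.le_ceil r⟩, rfl⟩
  refine measure_mono_null hcover (measure_iUnion_null fun n => ?_)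
  rw [show S = pureJumpFunction J γ from funext hS]
  exact pureJumpFunction.volume_image_Icc (fun s hs => (hγ s hs).le) (hfin n n.cast_nonneg)

/-- If `J` is a countable subset of `(0,∞)`, `γ : J → (0,∞)`, and the pure-jump function
`S(r) = ∑_{s ∈ J, s ≤ r} γ(s)` is finite for every `r ≥ 0`, then the range
`{S(r) : r ∈ [0,∞)}` has Lebesgue measure zero. -/
theorem range_of_pure_jump_function_measure_zero
    (J : Set ℝ) (hJc : J.Countable) (hJpos : ∀ s ∈ J, 0 < s)
    (γ : ℝ → ℝ) (hγ : ∀ s ∈ J, 0 < γ s)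
    (hfin : ∀ r : ℝ, 0 ≤ r → Summable (fun s : ↥(J ∩ Set.Iic r) => γ (s : ℝ)))
    (S : ℝ → ℝ)
    (hS : ∀ r : ℝ, S r = ∑' s : ↥(J ∩ Set.Iic r), γ (s : ℝ)) :
    volume (S '' Set.Ici (0 : ℝ)) = 0 :=
  range_of_pure_jump_function_measure_zero_general J γ hγ hfin S hS
end

section
/- For every θ > 0, sup over positive integers m of (E[exp(1 − e^{−θτ/m^{1/α}})])^m is finite. -/
/-!
Put `c = θ / m^{1/α}`. Since `1 - e^{-x}` lies in `[0, min 1 x]` and `exp` is convex on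
`[0, 1]`, `exp (1 - e^{-cτ}) ≤ 1 + (e - 1) min(1, cτ)`. As `L` is eventually bounded, the tail
satisfies `ℙ(τ > s) ≤ M s^{-α}` for every `s > 0`, and the layer-cake formula gives
`E[min(1, cτ)] = ∫₀¹ ℙ(cτ > t) dt ≤ M c^α / (1 - α) = M θ^α / ((1 - α) m)`, finite as `α < 1`.
So the expectation is at most `1 + A / m` with `A` independent of `m`, and its `m`-th power is
at most `e^A`.
-/

open MeasureTheory ProbabilityTheory Set Filter

namespace Real

lemma exp_le_one_add_mul_of_mem_Icc {u : ℝ} (hu : u ∈ Icc (0 : ℝ) 1) :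
    exp u ≤ 1 + (exp 1 - 1) * u := by
  have h := convexOn_exp.2 (mem_univ 0) (mem_univ 1) (sub_nonneg.2 hu.2) hu.1
    (sub_add_cancel 1 u)
  simp only [smul_eq_mul, mul_zero, mul_one, zero_add, exp_zero] at h
  linarith

lemma exp_one_sub_exp_neg_le {x : ℝ} (hx : 0 ≤ x) :
    exp (1 - exp (-x)) ≤ 1 + (exp 1 - 1) * min 1 x := by
  have h0 : 0 ≤ 1 - exp (-x) := sub_nonneg.2 (exp_le_one_iff.2 (neg_nonpos.2 hx))
  have hle : 1 - exp (-x) ≤ min 1 x :=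
    le_min (by linarith [exp_pos (-x)]) (by linarith [one_sub_le_exp_neg x])
  calc exp (1 - exp (-x)) ≤ 1 + (exp 1 - 1) * (1 - exp (-x)) :=
        exp_le_one_add_mul_of_mem_Icc ⟨h0, hle.trans (min_le_left _ _)⟩
    _ ≤ 1 + (exp 1 - 1) * min 1 x := by
        gcongr
        linarith [add_one_le_exp 1]

lemma pow_le_exp_of_le_one_add_div {x A : ℝ} {m : ℕ} (hx : 0 ≤ x) (hA : 0 ≤ A)
    (h : x ≤ 1 + A / m) : x ^ m ≤ exp A := by
  calc x ^ m ≤ (1 + A / m) ^ m := pow_le_pow_left₀ hx h m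
    _ = (1 - -A / m) ^ m := by ring
    _ ≤ exp (- -A) := one_sub_div_pow_le_exp_neg (by linarith [m.cast_nonneg (α := ℝ)])
    _ = exp A := by rw [neg_neg]

lemma lintegral_Ioo_zero_one_rpow_neg {α : ℝ} (hα : α < 1) :
    ∫⁻ t in Ioo (0 : ℝ) 1, ENNReal.ofReal (t ^ (-α)) = ENNReal.ofReal (1 / (1 - α)) := by
  have hint : IntegrableOn (fun t : ℝ => t ^ (-α)) (Ioo 0 1) :=
    (intervalIntegrable_iff_integrableOn_Ioo_of_le zero_le_one).1
      (intervalIntegral.intervalIntegrable_rpow' (by linarith))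
  rw [← ofReal_integral_eq_lintegral_ofReal hint
    ((ae_restrict_mem measurableSet_Ioo).mono fun t ht => rpow_nonneg ht.1.le _),
    ← integral_Ioc_eq_integral_Ioo, ← intervalIntegral.integral_of_le zero_le_one,
    integral_rpow (Or.inl (by linarith)), one_rpow, zero_rpow (by linarith)]
  ring_nf

end Real

open Real

section

variable {Ω : Type*} {_ : MeasurableSpace Ω} {μ : Measure Ω} {α : ℝ} {τ : Ω → ℝ}

lemma exists_measure_lt_le_mul_rpow_neg [IsProbabilityMeasure μ] (hα : 0 ≤ α) {L : ℝ → ℝ}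
    (hL : IsBoundedUnder (· ≤ ·) atTop L)
    (htail : ∀ t, 0 < t → μ {ω | t < τ ω} ≤ ENNReal.ofReal (L t / t ^ α)) :
    ∃ M, 0 ≤ M ∧ ∀ s, 0 < s → μ {ω | s < τ ω} ≤ ENNReal.ofReal (M * s ^ (-α)) := by
  obtain ⟨K, hK⟩ := hL.eventually_le
  obtain ⟨T, hT⟩ := (hK.and (eventually_gt_atTop 0)).exists_forall_of_atTop
  have hT0 : 0 < T := (hT T le_rfl).2
  refine ⟨max K 0 + T ^ α, by positivity, fun s hs => ?_⟩
  rw [rpow_neg hs.le, ← div_eq_mul_inv]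
  rcases le_or_gt T s with hTs | hsT
  · refine (htail s hs).trans (ENNReal.ofReal_le_ofReal ?_)
    gcongr
    linarith [(hT s hTs).1, le_max_left K 0, rpow_nonneg hT0.le α]
  · calc μ {ω | s < τ ω} ≤ ENNReal.ofReal 1 := by simpa using prob_le_one
      _ ≤ ENNReal.ofReal ((max K 0 + T ^ α) / s ^ α) := by
        refine ENNReal.ofReal_le_ofReal ((one_le_div (by positivity)).2 ?_)
        linarith [rpow_le_rpow hs.le hsT.le hα, le_max_right K 0]

lemma integral_min_one_mul_le (hα : α < 1) {M c : ℝ} (hM : 0 ≤ M) (hc : 0 < c)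
    (hτ : Measurable τ) (hτnn : ∀ ω, 0 ≤ τ ω)
    (htail : ∀ s, 0 < s → μ {ω | s < τ ω} ≤ ENNReal.ofReal (M * s ^ (-α))) :
    ∫ ω, min 1 (c * τ ω) ∂μ ≤ M / (1 - α) * c ^ α := by
  have hX0 : ∀ ω, 0 ≤ min 1 (c * τ ω) := fun ω => le_min zero_le_one (by positivity [hτnn ω])
  have hXm : Measurable fun ω => min 1 (c * τ ω) := by fun_prop
  have hlevel : ∀ t ∈ Ioi (0 : ℝ), μ {ω | t < min 1 (c * τ ω)} ≤
      (Ioo (0 : ℝ) 1).indicator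
        (fun t => ENNReal.ofReal (M * c ^ α) * ENNReal.ofReal (t ^ (-α))) t := by
    intro t (ht : 0 < t)
    rcases lt_or_ge t 1 with ht1 | ht1
    · rw [indicator_of_mem (show t ∈ Ioo (0 : ℝ) 1 from ⟨ht, ht1⟩),
        ← ENNReal.ofReal_mul (by positivity)]
      have hsub : {ω | t < min 1 (c * τ ω)} ⊆ {ω | t / c < τ ω} := fun ω hω =>
        (div_lt_iff₀' hc).2 (hω.out.trans_le (min_le_right _ _))
      refine (measure_mono hsub).trans ((htail _ (div_pos ht hc)).trans_eq ?_)
      rw [div_rpow ht.le hc.le, rpow_neg hc.le, div_inv_eq_mul]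
      ring_nf
    · have hempty : {ω | t < min 1 (c * τ ω)} = ∅ :=
        eq_empty_of_forall_notMem fun ω hω => (hω.out.trans_le (min_le_left _ _)).not_ge ht1
      rw [hempty, measure_empty]
      exact zero_le
  rw [integral_eq_lintegral_of_nonneg_ae (ae_of_all _ hX0) hXm.aestronglyMeasurable]
  refine ENNReal.toReal_le_of_le_ofReal (by positivity) ?_
  calc ∫⁻ ω, ENNReal.ofReal (min 1 (c * τ ω)) ∂μ
      = ∫⁻ t in Ioi 0, μ {ω | t < min 1 (c * τ ω)} :=
        lintegral_eq_lintegral_meas_lt μ (ae_of_all _ hX0) hXm.aemeasurable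
    _ ≤ ∫⁻ t in Ioi 0, (Ioo (0 : ℝ) 1).indicator
          (fun t => ENNReal.ofReal (M * c ^ α) * ENNReal.ofReal (t ^ (-α))) t :=
        setLIntegral_mono' measurableSet_Ioi hlevel
    _ = ENNReal.ofReal (M * c ^ α) * ∫⁻ t in Ioo (0 : ℝ) 1, ENNReal.ofReal (t ^ (-α)) := by
        rw [lintegral_indicator measurableSet_Ioo, Measure.restrict_restrict measurableSet_Ioo,
          inter_eq_self_of_subset_left Ioo_subset_Ioi_self,
          lintegral_const_mul' _ _ ENNReal.ofReal_ne_top]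
    _ = ENNReal.ofReal (M / (1 - α) * c ^ α) := by
        rw [lintegral_Ioo_zero_one_rpow_neg hα, ← ENNReal.ofReal_mul (by positivity)]
        congr 1
        ring

lemma integral_exp_one_sub_exp_neg_le [IsProbabilityMeasure μ] {X : Ω → ℝ} (hX : Measurable X)
    (hX0 : ∀ ω, 0 ≤ X ω) :
    ∫ ω, exp (1 - exp (-X ω)) ∂μ ≤ 1 + (exp 1 - 1) * ∫ ω, min 1 (X ω) ∂μ := by
  have hmin : Integrable (fun ω => min 1 (X ω)) μ :=
    Integrable.of_bound (by fun_prop) 1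
      (ae_of_all _ fun ω => by
        rw [norm_of_nonneg (le_min zero_le_one (hX0 ω))]; exact min_le_left _ _)
  have hexp : Integrable (fun ω => exp (1 - exp (-X ω))) μ :=
    Integrable.of_bound (by fun_prop) (exp 1)
      (ae_of_all _ fun ω => by
        rw [norm_of_nonneg (exp_pos _).le]; exact exp_le_exp.2 (by linarith [exp_pos (-X ω)]))
  calc ∫ ω, exp (1 - exp (-X ω)) ∂μ ≤ ∫ ω, 1 + (exp 1 - 1) * min 1 (X ω) ∂μ :=
        integral_mono hexp ((integrable_const 1).add (hmin.const_mul _))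
          fun ω => exp_one_sub_exp_neg_le (hX0 ω)
    _ = 1 + (exp 1 - 1) * ∫ ω, min 1 (X ω) ∂μ := by
        rw [integral_add (integrable_const 1) (hmin.const_mul _), integral_const_mul]
        simp

end

/-- For every `θ > 0`, `sup_m (E[exp(1 − e^{−θτ/m^{1/α}})])^m < ∞`, the supremum
being over positive integers `m`. -/
theorem sup_exp_moment_finite
    {Ω : Type*} [MeasureSpace Ω] [IsProbabilityMeasure (ℙ : Measure Ω)]
    (α : ℝ) (hα : α ∈ Set.Ioo (0 : ℝ) 1)
    (τ : Ω → ℝ) (hτmeas : Measurable τ) (hτnn : ∀ ω, 0 ≤ τ ω)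
    (Lf : ℝ → ℝ) (hLf : Filter.Tendsto Lf Filter.atTop (nhds 1))
    (htail : ∀ t : ℝ, 0 < t → ℙ {ω | t < τ ω} = ENNReal.ofReal (Lf t / t ^ α))
    (θ : ℝ) (hθ : 0 < θ) :
    ∃ C : ℝ, ∀ m : ℕ, 0 < m →
      (∫ ω, Real.exp (1 - Real.exp (-(θ * τ ω / (m : ℝ) ^ (1 / α)))) ∂ℙ) ^ m ≤ C := by
  obtain ⟨M, hM, hτtail⟩ := exists_measure_lt_le_mul_rpow_neg hα.1.le hLf.isBoundedUnder_le
    fun t ht => (htail t ht).le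
  have hα1 : 0 < 1 - α := sub_pos.2 hα.2
  have he : 0 ≤ exp 1 - 1 := by linarith [add_one_le_exp 1]
  refine ⟨exp ((exp 1 - 1) * (M / (1 - α) * θ ^ α)), fun m hm => ?_⟩
  have hm0 : (0 : ℝ) < m := Nat.cast_pos.2 hm
  have hcα : (θ / (m : ℝ) ^ (1 / α)) ^ α = θ ^ α / m := by
    rw [div_rpow hθ.le (by positivity), ← rpow_mul m.cast_nonneg, one_div_mul_cancel hα.1.ne',
      rpow_one]
  refine pow_le_exp_of_le_one_add_div (integral_nonneg fun _ => (exp_pos _).le)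
    (by positivity) ?_
  calc ∫ ω, exp (1 - exp (-(θ * τ ω / (m : ℝ) ^ (1 / α)))) ∂ℙ
      ≤ 1 + (exp 1 - 1) * ∫ ω, min 1 (θ * τ ω / (m : ℝ) ^ (1 / α)) ∂ℙ :=
        integral_exp_one_sub_exp_neg_le (by fun_prop) fun ω => by positivity [hτnn ω]
    _ ≤ 1 + (exp 1 - 1) * (M / (1 - α) * (θ / (m : ℝ) ^ (1 / α)) ^ α) := by
        simp_rw [mul_div_right_comm θ]
        gcongr
        exact integral_min_one_mul_le hα.2 hM (by positivity) hτmeas hτnn hτtail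
    _ = 1 + (exp 1 - 1) * (M / (1 - α) * θ ^ α) / m := by rw [hcα]; ring
end

section
/- For every θ > 0, lim_{m→∞} m · (E[exp(1 − e^{−θτ/m^{1/α}})] − 1) = θ^α ∫_0^∞ x^{−α} e^{1−e^{−x}} e^{−x} dx, where the limit is over positive integers m. -/
open MeasureTheory ProbabilityTheory Filter Set Topology

/-! With `φ(x) = exp (1 - e^{-x})`, the tail formula `E[φ(X)] - φ(0) = ∫_0^∞ P(X > t) φ'(t) dt`
for `X = θτ/m^{1/α}` turns `m (E[φ(X)] - 1)` into `θ^α ∫_0^∞ t^{-α} r(m^{1/α} t / θ) φ'(t) dt`,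
where `r(s) = s^α P(τ > s) → 1`. As `r` is bounded on `(0, ∞)` and `φ'(t) ≤ e · e^{-t}`, the
integrands are dominated by a multiple of the Gamma integrand `t^{-α} e^{-t}`, integrable since
`α < 1`, and dominated convergence gives the limit. -/

section LayerCake

variable {Ω : Type*} [MeasurableSpace Ω] {μ : Measure Ω} [IsFiniteMeasure μ]

theorem integral_comp_sub_eq_integral_meas_lt_mul {f : Ω → ℝ} {G g : ℝ → ℝ}
    (hf_nn : 0 ≤ᵐ[μ] f) (hf : AEMeasurable f μ) (hG : ∀ x, HasDerivAt G (g x) x)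
    (hg : Continuous g) (hg_nn : ∀ x, 0 ≤ g x) (hGf : Integrable (fun ω => G (f ω)) μ) :
    ∫ ω, (G (f ω) - G 0) ∂μ = ∫ t in Ioi 0, μ.real {ω | t < f ω} * g t := by
  have hFTC : ∀ x, G x - G 0 = ∫ t in (0 : ℝ)..x, g t := fun x =>
    (intervalIntegral.integral_eq_sub_of_hasDerivAt (fun t _ => hG t)
      (hg.intervalIntegrable 0 x)).symm
  simp_rw [hFTC]
  have h_nn : 0 ≤ᵐ[μ] fun ω => ∫ t in (0 : ℝ)..f ω, g t := by
    filter_upwards [hf_nn] with ω hω using intervalIntegral.integral_nonneg hω fun t _ => hg_nn t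
  have h_meas : AEStronglyMeasurable (fun ω => ∫ t in (0 : ℝ)..f ω, g t) μ :=
    ((hGf.sub (integrable_const (G 0))).congr (.of_forall fun ω => hFTC (f ω))).1
  have h_tail : Antitone fun t : ℝ => μ {ω | t < f ω} := fun _ _ hst =>
    measure_mono fun _ hω => lt_of_le_of_lt hst hω
  have h_tail_meas : Measurable fun t => μ {ω | t < f ω} * ENNReal.ofReal (g t) :=
    h_tail.measurable.mul (ENNReal.measurable_ofReal.comp hg.measurable)
  rw [integral_eq_lintegral_of_nonneg_ae h_nn h_meas,
    lintegral_comp_eq_lintegral_meas_lt_mul μ hf_nn hf (fun t _ => hg.intervalIntegrable 0 t)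
      (.of_forall fun t => hg_nn t),
    ← integral_toReal h_tail_meas.aemeasurable
      (.of_forall fun t => ENNReal.mul_lt_top (measure_lt_top _ _) ENNReal.ofReal_lt_top)]
  refine integral_congr_ae (.of_forall fun t => ?_)
  simp only [ENNReal.toReal_mul, ENNReal.toReal_ofReal (hg_nn t), measureReal_def]

end LayerCake

theorem hasDerivAt_exp_one_sub_exp_neg (x : ℝ) :
    HasDerivAt (fun x => Real.exp (1 - Real.exp (-x)))
      (Real.exp (1 - Real.exp (-x)) * Real.exp (-x)) x := by
  have := (((hasDerivAt_neg x).exp).const_sub 1).exp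
  convert this using 1
  ring

theorem integral_exp_one_sub_exp_neg_sub_one {Ω : Type*} [MeasurableSpace Ω] {μ : Measure Ω}
    [IsProbabilityMeasure μ] {X : Ω → ℝ} (hX : Measurable X) (hX_nn : ∀ ω, 0 ≤ X ω) :
    (∫ ω, Real.exp (1 - Real.exp (-X ω)) ∂μ) - 1
      = ∫ t in Ioi 0, μ.real {ω | t < X ω} * (Real.exp (1 - Real.exp (-t)) * Real.exp (-t)) := by
  have h_int : Integrable (fun ω => Real.exp (1 - Real.exp (-X ω))) μ := by
    refine Integrable.of_bound (by fun_prop) (Real.exp 1) (.of_forall fun ω => ?_)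
    rw [Real.norm_of_nonneg (Real.exp_nonneg _), Real.exp_le_exp]
    linarith [Real.exp_pos (-X ω)]
  rw [← integral_comp_sub_eq_integral_meas_lt_mul (.of_forall hX_nn) hX.aemeasurable
      hasDerivAt_exp_one_sub_exp_neg (by fun_prop) (fun x => by positivity) h_int,
    integral_sub h_int (integrable_const _)]
  simp

section RegularlyVaryingTail

variable {Ω : Type*} [MeasurableSpace Ω] {μ : Measure Ω} {τ : Ω → ℝ} {α : ℝ}

theorem tendsto_rpow_mul_measureReal_lt_of_tail {L : ℝ → ℝ} {ℓ : ℝ} (hℓ : 0 ≤ ℓ)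
    (hL : Tendsto L atTop (𝓝 ℓ))
    (htail : ∀ t, 0 < t → μ {ω | t < τ ω} = ENNReal.ofReal (L t / t ^ α)) :
    Tendsto (fun s => s ^ α * μ.real {ω | s < τ ω}) atTop (𝓝 ℓ) := by
  have h_max : Tendsto (fun s => max (L s) 0) atTop (𝓝 ℓ) := by
    simpa [max_eq_left hℓ] using hL.max (tendsto_const_nhds (x := (0 : ℝ)))
  refine h_max.congr' ?_
  filter_upwards [eventually_gt_atTop 0] with s hs
  have hsα : 0 < s ^ α := Real.rpow_pos_of_pos hs α
  rw [measureReal_def, htail s hs, ENNReal.toReal_ofReal', mul_max_of_nonneg _ _ hsα.le,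
    mul_div_cancel₀ _ hsα.ne', mul_zero]

variable [IsFiniteMeasure μ]

theorem measurable_rpow_mul_measureReal_lt :
    Measurable fun s => s ^ α * μ.real {ω | s < τ ω} := by
  have h_tail : Antitone fun s : ℝ => μ.real {ω | s < τ ω} := fun _ _ hst =>
    measureReal_mono fun _ hω => lt_of_le_of_lt hst hω
  exact (measurable_id.pow_const α).mul h_tail.measurable

theorem exists_norm_rpow_mul_measureReal_lt_le (hα : 0 ≤ α) {ℓ : ℝ}
    (h : Tendsto (fun s => s ^ α * μ.real {ω | s < τ ω}) atTop (𝓝 ℓ)) :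
    ∃ C, ∀ s, 0 < s → ‖s ^ α * μ.real {ω | s < τ ω}‖ ≤ C := by
  obtain ⟨T, hT⟩ := eventually_atTop.1 (h.norm.eventually_le_const (lt_add_one ‖ℓ‖))
  refine ⟨max (‖ℓ‖ + 1) (T ^ α * μ.real univ), fun s hs => ?_⟩
  rcases le_total T s with hTs | hsT
  · exact (hT s hTs).trans (le_max_left _ _)
  · refine le_max_of_le_right ?_
    rw [Real.norm_of_nonneg (by positivity)]
    exact mul_le_mul (Real.rpow_le_rpow hs.le hsT hα) (measureReal_mono (subset_univ _))
      measureReal_nonneg (Real.rpow_nonneg (hs.le.trans hsT) α)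

end RegularlyVaryingTail

theorem tendsto_integral_Ioi_rpow_neg_mul_comp_mul {ι : Type*} {l : Filter ι}
    [l.IsCountablyGenerated] {α : ℝ} (hα : α < 1) {r g : ℝ → ℝ} {ℓ C B : ℝ}
    (hr : Tendsto r atTop (𝓝 ℓ)) (hr_meas : Measurable r) (hrC : ∀ s, 0 < s → ‖r s‖ ≤ C)
    (hg : Measurable g) (hgB : ∀ t, 0 < t → ‖g t‖ ≤ B * Real.exp (-t))
    {c : ι → ℝ} (hc : Tendsto c l atTop) :
    Tendsto (fun i => ∫ t in Ioi 0, t ^ (-α) * r (c i * t) * g t) l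
      (𝓝 (ℓ * ∫ t in Ioi 0, t ^ (-α) * g t)) := by
  have h_bound_int : IntegrableOn (fun t => C * B * (Real.exp (-t) * t ^ (1 - α - 1))) (Ioi 0) :=
    (Real.GammaIntegral_convergent (by linarith)).const_mul _
  have hC : 0 ≤ C := (norm_nonneg _).trans (hrC 1 one_pos)
  rw [← integral_const_mul]
  refine tendsto_integral_filter_of_dominated_convergence _
    (.of_forall fun i => by fun_prop) ?_ h_bound_int ?_
  · filter_upwards [hc.eventually_gt_atTop 0] with i hi
    refine (ae_restrict_iff' measurableSet_Ioi).2 (.of_forall fun t (ht : 0 < t) => ?_)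
    rw [norm_mul, norm_mul, Real.norm_of_nonneg (Real.rpow_nonneg ht.le _), sub_sub_cancel_left]
    calc t ^ (-α) * ‖r (c i * t)‖ * ‖g t‖ = t ^ (-α) * (‖r (c i * t)‖ * ‖g t‖) := by ring
      _ ≤ t ^ (-α) * (C * (B * Real.exp (-t))) := by
          refine mul_le_mul_of_nonneg_left ?_ (by positivity)
          exact mul_le_mul (hrC _ (mul_pos hi ht)) (hgB t ht) (norm_nonneg _) hC
      _ = C * B * (Real.exp (-t) * t ^ (-α)) := by ring
  · refine (ae_restrict_iff' measurableSet_Ioi).2 (.of_forall fun t (ht : 0 < t) => ?_)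
    have := (hr.comp (hc.atTop_mul_const ht)).const_mul (t ^ (-α)) |>.mul_const (g t)
    rwa [show ℓ * (t ^ (-α) * g t) = t ^ (-α) * ℓ * g t by ring]

theorem mul_measureReal_lt_div_rpow {Ω : Type*} [MeasurableSpace Ω] (μ : Measure Ω) (τ : Ω → ℝ)
    {α θ m t : ℝ} (hα : α ≠ 0) (hθ : 0 < θ) (hm : 0 < m) (ht : 0 < t) :
    m * μ.real {ω | t < θ * τ ω / m ^ (1 / α)} =
      θ ^ α * (t ^ (-α) *
        ((m ^ (1 / α) / θ * t) ^ α * μ.real {ω | m ^ (1 / α) / θ * t < τ ω})) := by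
  have hc : 0 < m ^ (1 / α) := Real.rpow_pos_of_pos hm _
  have h_set : {ω | t < θ * τ ω / m ^ (1 / α)} = {ω | m ^ (1 / α) / θ * t < τ ω} := by
    ext ω
    rw [mem_ofPred_eq, mem_ofPred_eq, lt_div_iff₀ hc, div_mul_eq_mul_div, div_lt_iff₀ hθ]
    ring_nf
  have h_pow : (m ^ (1 / α) / θ * t) ^ α = m * t ^ α / θ ^ α := by
    rw [Real.mul_rpow (by positivity) ht.le, Real.div_rpow hc.le hθ.le, ← Real.rpow_mul hm.le,
      one_div_mul_cancel hα, Real.rpow_one, div_mul_eq_mul_div]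
  rw [h_set, h_pow, Real.rpow_neg ht.le]
  field_simp

/-- For every `θ > 0`,
`lim_{m→∞} m · (E[exp(1 − e^{−θτ/m^{1/α}})] − 1) = θ^α ∫_0^∞ x^{−α} e^{1−e^{−x}} e^{−x} dx`,
the limit being over positive integers `m`. -/
theorem lim_m_mul_exp_moment_sub_one
    {Ω : Type*} [MeasureSpace Ω] [IsProbabilityMeasure (ℙ : Measure Ω)]
    (α : ℝ) (hα : α ∈ Set.Ioo (0 : ℝ) 1)
    (τ : Ω → ℝ) (hτmeas : Measurable τ) (hτnn : ∀ ω, 0 ≤ τ ω)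
    (Lf : ℝ → ℝ) (hLf : Filter.Tendsto Lf Filter.atTop (nhds 1))
    (htail : ∀ t : ℝ, 0 < t → ℙ {ω | t < τ ω} = ENNReal.ofReal (Lf t / t ^ α))
    (θ : ℝ) (hθ : 0 < θ) :
    Filter.Tendsto
      (fun m : ℕ =>
        (m : ℝ) * ((∫ ω, Real.exp (1 - Real.exp (-(θ * τ ω / (m : ℝ) ^ (1 / α)))) ∂ℙ) - 1))
      Filter.atTop
      (nhds (θ ^ α *
        ∫ x in Set.Ioi (0 : ℝ), x ^ (-α) * Real.exp (1 - Real.exp (-x)) * Real.exp (-x))) := by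
  obtain ⟨hα0, hα1⟩ := hα
  have hr := tendsto_rpow_mul_measureReal_lt_of_tail zero_le_one hLf htail
  obtain ⟨C, hC⟩ := exists_norm_rpow_mul_measureReal_lt_le hα0.le hr
  have hc : Tendsto (fun m : ℕ => (m : ℝ) ^ (1 / α) / θ) atTop atTop :=
    ((tendsto_rpow_atTop (by positivity)).comp tendsto_natCast_atTop_atTop).atTop_div_const hθ
  have hg_le : ∀ t : ℝ, 0 < t →
      ‖Real.exp (1 - Real.exp (-t)) * Real.exp (-t)‖ ≤ Real.exp 1 * Real.exp (-t) := fun t _ => by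
    rw [Real.norm_of_nonneg (by positivity)]
    gcongr
    linarith [Real.exp_pos (-t)]
  have hlim := tendsto_integral_Ioi_rpow_neg_mul_comp_mul hα1 hr measurable_rpow_mul_measureReal_lt
    hC (by fun_prop) hg_le hc
  simp only [one_mul, ← mul_assoc] at hlim
  refine (hlim.const_mul (θ ^ α)).congr' ?_
  filter_upwards [eventually_gt_atTop 0] with m hm
  have hX_nn : ∀ ω, 0 ≤ θ * τ ω / (m : ℝ) ^ (1 / α) := fun ω => by
    have := hτnn ω
    positivity
  rw [integral_exp_one_sub_exp_neg_sub_one (by fun_prop) hX_nn, ← integral_const_mul,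
    ← integral_const_mul]
  refine setIntegral_congr_fun measurableSet_Ioi fun t (ht : 0 < t) => ?_
  rw [← mul_assoc (m : ℝ), mul_measureReal_lt_div_rpow ℙ τ hα0.ne' hθ (by exact_mod_cast hm) ht]
  ring
end

section
/- Almost surely, for every θ > 0, n^{−(1−ν)} Σ_{i=1}^{n} (1 − e^{−θ τ_i / n^{ν/α}}) → Γ(1−α) θ^α as n → ∞, where Γ is the Gamma function. -/
/-!
Write `ψ(λ) = 𝔼[1 - e^{-λτ}]`. By the layer-cake formula `ψ(λ) = λ ∫₀^∞ e^{-λt} ℙ(τ > t) dt`, and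
the Abelian theorem for Laplace transforms turns `ℙ(τ > t) ∼ t^{-α}` into `ψ(λ) ∼ Γ(1-α) λ^α` as
`λ → 0⁺`. So the mean of `n^{-(1-ν)} ∑_{i ≤ n} (1 - e^{-θτ_i/n^{ν/α}})` is `n^ν ψ(θ/n^{ν/α}) →
Γ(1-α) θ^α`, while its variance is at most `n^{-(1-ν)}` times that mean. Chebyshev's inequality and
Borel–Cantelli give almost sure convergence along `n = k^m` with `m(1-ν) > 1`, simultaneously for
all rational `θ`. The sums are monotone in `n` and in `θ`, and `(k+1)^m / k^m → 1`, so a sandwich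
extends the convergence to all `n` and all real `θ > 0`.
-/

open MeasureTheory ProbabilityTheory Filter Set Real Topology

theorem one_sub_exp_neg_mul_mem_Icc {s x : ℝ} (hs : 0 ≤ s) (hx : 0 ≤ x) :
    1 - exp (-(s * x)) ∈ Icc 0 1 :=
  ⟨sub_nonneg.mpr (exp_le_one_iff.mpr (neg_nonpos.mpr (mul_nonneg hs hx))),
    sub_le_self _ (exp_pos _).le⟩

theorem rpow_one_sub_mul_setIntegral_exp_neg_mul {lam : ℝ} (hlam : 0 < lam) (α : ℝ)
    (h : ℝ → ℝ) :
    lam ^ (1 - α) * ∫ t in Ioi 0, exp (-(lam * t)) * h t =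
      ∫ s in Ioi 0, exp (-s) * s ^ (1 - α - 1) * ((s / lam) ^ α * h (s / lam)) := by
  have hsub := integral_comp_mul_left_Ioi (fun s => exp (-s) * h (s / lam)) 0 hlam
  simp only [mul_zero, mul_div_cancel_left₀ _ hlam.ne', smul_eq_mul] at hsub
  rw [hsub, ← mul_assoc, ← rpow_neg_one, ← rpow_add hlam, ← integral_const_mul]
  refine setIntegral_congr_fun measurableSet_Ioi fun s (hs : 0 < s) => ?_
  rw [div_rpow hs.le hlam.le, show 1 - α - 1 = -α by ring, show 1 - α + -1 = -α by ring,
    rpow_neg hs.le, rpow_neg hlam.le]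
  field_simp [(rpow_pos_of_pos hs α).ne']

theorem tendsto_rpow_one_sub_mul_setIntegral_exp_neg_mul {α : ℝ} (hα0 : 0 ≤ α) (hα1 : α < 1)
    {h : ℝ → ℝ} (hmeas : Measurable h) (h0 : ∀ t, 0 ≤ h t) (h1 : ∀ t, h t ≤ 1)
    (hlim : Tendsto (fun t => t ^ α * h t) atTop (𝓝 1)) :
    Tendsto (fun lam => lam ^ (1 - α) * ∫ t in Ioi 0, exp (-(lam * t)) * h t) (𝓝[>] 0)
      (𝓝 (Gamma (1 - α))) := by
  obtain ⟨T, hT⟩ := eventually_atTop.mp (hlim.eventually (eventually_le_nhds one_lt_two))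
  set C := max ((max T 0) ^ α) 2
  have hC : ∀ t, 0 < t → t ^ α * h t ≤ C := by
    intro t ht
    rcases le_or_gt t (max T 0) with htT | htT
    · calc t ^ α * h t ≤ t ^ α := mul_le_of_le_one_right (rpow_nonneg ht.le α) (h1 t)
        _ ≤ max T 0 ^ α := rpow_le_rpow ht.le htT hα0
        _ ≤ C := le_max_left _ _
    · exact (hT t (le_max_left T 0 |>.trans htT.le)).trans (le_max_right _ _)
  rw [Gamma_eq_integral (by linarith)]
  refine (tendsto_integral_filter_of_dominated_convergence
    (fun s => C * (exp (-s) * s ^ (1 - α - 1))) ?_ ?_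
    ((GammaIntegral_convergent (by linarith)).const_mul C) ?_).congr'
    (eventually_nhdsWithin_of_forall fun lam hlam =>
      (rpow_one_sub_mul_setIntegral_exp_neg_mul hlam α h).symm)
  · exact Eventually.of_forall fun lam => by fun_prop
  · filter_upwards [self_mem_nhdsWithin] with lam (hlam : 0 < lam)
    refine (ae_restrict_iff' measurableSet_Ioi).mpr (Eventually.of_forall fun s (hs : 0 < s) => ?_)
    have hs' := hC (s / lam) (div_pos hs hlam)
    have hg : 0 ≤ exp (-s) * s ^ (1 - α - 1) := by positivity
    rw [norm_of_nonneg (mul_nonneg hg (mul_nonneg (by positivity) (h0 _)))]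
    nlinarith
  · refine (ae_restrict_iff' measurableSet_Ioi).mpr (Eventually.of_forall fun s (hs : 0 < s) => ?_)
    have hdiv : Tendsto (fun lam => s / lam) (𝓝[>] 0) atTop :=
      tendsto_inv_nhdsGT_zero.const_mul_atTop hs
    simpa using (hlim.comp hdiv).const_mul (exp (-s) * s ^ (1 - α - 1))

theorem measurable_toReal_measure_lt {Ω : Type*} [MeasurableSpace Ω] (μ : Measure Ω)
    (X : Ω → ℝ) : Measurable fun t : ℝ => (μ {ω | t < X ω}).toReal :=
  (Antitone.measurable fun s t (hst : s ≤ t) =>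
    measure_mono fun ω (hω : t < X ω) => hst.trans_lt hω).ennreal_toReal

theorem integral_one_sub_exp_neg_mul_eq_mul_setIntegral {Ω : Type*} [MeasurableSpace Ω]
    {μ : Measure Ω} [IsFiniteMeasure μ] {X : Ω → ℝ} (hX : AEMeasurable X μ) (hX0 : 0 ≤ᵐ[μ] X)
    {lam : ℝ} (hlam : 0 < lam) :
    ∫ ω, (1 - exp (-(lam * X ω))) ∂μ =
      lam * ∫ t in Ioi 0, exp (-(lam * t)) * (μ {ω | t < X ω}).toReal := by
  have hcont : Continuous fun t => lam * exp (-(lam * t)) := by fun_prop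
  have hprim (x : ℝ) : ∫ t in 0..x, lam * exp (-(lam * t)) = 1 - exp (-(lam * x)) := by
    have hderiv (t : ℝ) : HasDerivAt (fun t => -exp (-(lam * t))) (lam * exp (-(lam * t))) t := by
      simpa [mul_comm] using (((hasDerivAt_id t).const_mul lam).fun_neg.exp).fun_neg
    rw [intervalIntegral.integral_eq_sub_of_hasDerivAt (fun t _ => hderiv t)
      (hcont.intervalIntegrable _ _)]
    simp only [mul_zero, neg_zero, exp_zero]
    ring
  have hcake := lintegral_comp_eq_lintegral_meas_lt_mul μ hX0 hX
    (fun t _ => hcont.intervalIntegrable 0 t) (ae_of_all _ fun t => by positivity)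
  simp_rw [hprim] at hcake
  have hpull : ∫⁻ t in Ioi 0, μ {ω | t < X ω} * ENNReal.ofReal (lam * exp (-(lam * t))) =
      ENNReal.ofReal lam *
        ∫⁻ t in Ioi 0, ENNReal.ofReal (exp (-(lam * t)) * (μ {ω | t < X ω}).toReal) := by
    rw [← lintegral_const_mul' _ _ ENNReal.ofReal_ne_top]
    refine lintegral_congr fun t => ?_
    rw [ENNReal.ofReal_mul (exp_pos _).le, ENNReal.ofReal_toReal (measure_ne_top _ _),
      ENNReal.ofReal_mul hlam.le]
    ring
  have hmeas : Measurable fun t => exp (-(lam * t)) * (μ {ω | t < X ω}).toReal :=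
    (by fun_prop : Measurable fun t => exp (-(lam * t))).mul (measurable_toReal_measure_lt μ X)
  rw [integral_eq_lintegral_of_nonneg_ae
      (hX0.mono fun ω hω => (one_sub_exp_neg_mul_mem_Icc hlam.le hω).1) (by fun_prop),
    integral_eq_lintegral_of_nonneg_ae (ae_of_all _ fun t => by positivity)
      hmeas.aestronglyMeasurable,
    hcake, hpull, ENNReal.toReal_mul, ENNReal.toReal_ofReal hlam.le]

theorem tendsto_rpow_neg_mul_integral_one_sub_exp_neg_mul {Ω : Type*} [MeasurableSpace Ω]
    {μ : Measure Ω} [IsProbabilityMeasure μ] {α : ℝ} (hα0 : 0 ≤ α) (hα1 : α < 1) {X : Ω → ℝ}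
    (hX : AEMeasurable X μ) (hX0 : 0 ≤ᵐ[μ] X)
    (htail : Tendsto (fun t => t ^ α * (μ {ω | t < X ω}).toReal) atTop (𝓝 1)) :
    Tendsto (fun lam => lam ^ (-α) * ∫ ω, (1 - exp (-(lam * X ω))) ∂μ) (𝓝[>] 0)
      (𝓝 (Gamma (1 - α))) := by
  refine (tendsto_rpow_one_sub_mul_setIntegral_exp_neg_mul hα0 hα1
    (measurable_toReal_measure_lt μ X)
    (fun t => ENNReal.toReal_nonneg) (fun t => ENNReal.toReal_le_of_le_ofReal zero_le_one
      (by simpa using prob_le_one)) htail).congr' ?_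
  filter_upwards [self_mem_nhdsWithin] with lam (hlam : 0 < lam)
  rw [integral_one_sub_exp_neg_mul_eq_mul_setIntegral hX hX0 hlam, ← mul_assoc,
    ← rpow_add_one hlam.ne', neg_add_eq_sub]

theorem tendsto_rpow_mul_comp_div_rpow {ψ : ℝ → ℝ} {α ν c : ℝ} (hα : 0 < α) (hν : 0 < ν)
    (hψ : Tendsto (fun lam => lam ^ (-α) * ψ lam) (𝓝[>] 0) (𝓝 c)) {q : ℝ} (hq : 0 < q) :
    Tendsto (fun x => x ^ ν * ψ (q / x ^ (ν / α))) atTop (𝓝 (c * q ^ α)) := by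
  have hlam : Tendsto (fun x : ℝ => q / x ^ (ν / α)) atTop (𝓝[>] 0) :=
    tendsto_nhdsWithin_iff.2 ⟨tendsto_const_nhds.div_atTop (tendsto_rpow_atTop (div_pos hν hα)),
      eventually_gt_atTop 0 |>.mono fun x hx => div_pos hq (rpow_pos_of_pos hx _)⟩
  refine ((hψ.comp hlam).mul_const (q ^ α)).congr' (eventually_gt_atTop 0 |>.mono fun x hx => ?_)
  have hxγ : 0 < x ^ (ν / α) := rpow_pos_of_pos hx _
  have hpow : (q / x ^ (ν / α)) ^ (-α) = x ^ ν / q ^ α := by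
    rw [rpow_neg (div_pos hq hxγ).le, div_rpow hq.le hxγ.le, ← rpow_mul hx.le,
      div_mul_cancel₀ _ hα.ne', inv_div]
  simp only [Function.comp_apply, hpow]
  field_simp [(rpow_pos_of_pos hq α).ne']

noncomputable def laplaceSum (a : ℕ → ℝ) (n : ℕ) (s : ℝ) : ℝ :=
  ∑ i ∈ Finset.Icc 1 n, (1 - exp (-(s * a i)))

noncomputable def scaledLaplaceSum (a : ℕ → ℝ) (β γ : ℝ) (n : ℕ) (θ : ℝ) : ℝ :=
  (n : ℝ) ^ (-β) * laplaceSum a n (θ / (n : ℝ) ^ γ)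

section LaplaceSum

variable {a : ℕ → ℝ}

theorem laplaceSum_mem_Icc (ha : ∀ i, 0 ≤ a i) (n : ℕ) {s : ℝ} (hs : 0 ≤ s) :
    laplaceSum a n s ∈ Icc 0 (n : ℝ) :=
  ⟨Finset.sum_nonneg fun i _ => (one_sub_exp_neg_mul_mem_Icc hs (ha i)).1,
    (Finset.sum_le_card_nsmul _ _ 1 fun i _ => (one_sub_exp_neg_mul_mem_Icc hs (ha i)).2).trans
      (by simp)⟩

theorem laplaceSum_mono_left (ha : ∀ i, 0 ≤ a i) {s : ℝ} (hs : 0 ≤ s) :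
    Monotone fun n => laplaceSum a n s := fun _ _ hnn' =>
  Finset.sum_le_sum_of_subset_of_nonneg (Finset.Icc_subset_Icc_right hnn') fun i _ _ =>
    (one_sub_exp_neg_mul_mem_Icc hs (ha i)).1

theorem laplaceSum_monotone (ha : ∀ i, 0 ≤ a i) (n : ℕ) : Monotone (laplaceSum a n) :=
  fun _ _ hss' => Finset.sum_le_sum fun i _ =>
    sub_le_sub_left (exp_le_exp.mpr (neg_le_neg (mul_le_mul_of_nonneg_right hss' (ha i)))) 1

theorem scaledLaplaceSum_monotone (ha : ∀ i, 0 ≤ a i) (β γ : ℝ) (n : ℕ) :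
    Monotone (scaledLaplaceSum a β γ n) := fun _ _ hθθ' =>
  mul_le_mul_of_nonneg_left
    (laplaceSum_monotone ha n (div_le_div_of_nonneg_right hθθ' (by positivity)))
    (by positivity)

theorem rpow_neg_mul_laplaceSum_le (ha : ∀ i, 0 ≤ a i) {β γ θ : ℝ} (hβ : 0 ≤ β) (hγ : 0 ≤ γ)
    (hθ : 0 ≤ θ) {x x' : ℝ} (hx : 0 < x) (hxx' : x ≤ x') {m m' : ℕ} (hmm' : m ≤ m') :
    x' ^ (-β) * laplaceSum a m (θ / x' ^ γ) ≤ x ^ (-β) * laplaceSum a m' (θ / x ^ γ) := by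
  have hx' : 0 < x' := hx.trans_le hxx'
  refine mul_le_mul (rpow_le_rpow_of_nonpos hx hxx' (neg_nonpos.mpr hβ)) ?_
    (laplaceSum_mem_Icc ha m (by positivity)).1 (by positivity)
  calc laplaceSum a m (θ / x' ^ γ) ≤ laplaceSum a m (θ / x ^ γ) :=
        laplaceSum_monotone ha m
          (div_le_div_of_nonneg_left hθ (by positivity) (rpow_le_rpow hx.le hxx' hγ))
    _ ≤ laplaceSum a m' (θ / x ^ γ) := laplaceSum_mono_left ha (by positivity) hmm'

theorem div_rpow_mul_scaledLaplaceSum (a : ℕ → ℝ) (β γ θ : ℝ) {x y : ℕ} (hx : 0 < x)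
    (hy : 0 < y) :
    ((y : ℝ) / x) ^ β * scaledLaplaceSum a β γ y (θ * ((y : ℝ) / x) ^ γ) =
      (x : ℝ) ^ (-β) * laplaceSum a y (θ / (x : ℝ) ^ γ) := by
  have hx' : (0 : ℝ) < x := Nat.cast_pos.mpr hx
  have hy' : (0 : ℝ) < y := Nat.cast_pos.mpr hy
  have hyβ : (y : ℝ) ^ β ≠ 0 := (rpow_pos_of_pos hy' β).ne'
  have hyγ : (y : ℝ) ^ γ ≠ 0 := (rpow_pos_of_pos hy' γ).ne'
  rw [scaledLaplaceSum, div_rpow hy'.le hx'.le, div_rpow hy'.le hx'.le, ← mul_assoc,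
    rpow_neg hy'.le, rpow_neg hx'.le]
  congr 2
  · field_simp
  · field_simp

theorem scaledLaplaceSum_le (ha : ∀ i, 0 ≤ a i) {β γ θ : ℝ} (hβ : 0 ≤ β) (hγ : 0 ≤ γ)
    (hθ : 0 ≤ θ) {n₁ n n₂ : ℕ} (hn₁ : 0 < n₁) (h₁ : n₁ ≤ n) (h₂ : n ≤ n₂) :
    scaledLaplaceSum a β γ n θ ≤
      ((n₂ : ℝ) / n₁) ^ β * scaledLaplaceSum a β γ n₂ (θ * ((n₂ : ℝ) / n₁) ^ γ) := by
  rw [div_rpow_mul_scaledLaplaceSum a β γ θ hn₁ (hn₁.trans_le (h₁.trans h₂))]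
  exact rpow_neg_mul_laplaceSum_le ha hβ hγ hθ (Nat.cast_pos.mpr hn₁) (Nat.cast_le.mpr h₁) h₂

theorem le_scaledLaplaceSum (ha : ∀ i, 0 ≤ a i) {β γ θ : ℝ} (hβ : 0 ≤ β) (hγ : 0 ≤ γ)
    (hθ : 0 ≤ θ) {n₁ n n₂ : ℕ} (hn₁ : 0 < n₁) (h₁ : n₁ ≤ n) (h₂ : n ≤ n₂) :
    ((n₁ : ℝ) / n₂) ^ β * scaledLaplaceSum a β γ n₁ (θ * ((n₁ : ℝ) / n₂) ^ γ) ≤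
      scaledLaplaceSum a β γ n θ := by
  have hn : 0 < n := hn₁.trans_le h₁
  rw [div_rpow_mul_scaledLaplaceSum a β γ θ (hn.trans_le h₂) hn₁]
  exact rpow_neg_mul_laplaceSum_le ha hβ hγ hθ (Nat.cast_pos.mpr hn) (Nat.cast_le.mpr h₂) h₁

end LaplaceSum

theorem tendsto_apply_of_monotone_of_tendsto_rat {ι : Type*} {l : Filter ι} {G : ι → ℝ → ℝ}
    {g : ℝ → ℝ} (hG : ∀ i, Monotone (G i))
    (hq : ∀ q : ℚ, 0 < (q : ℝ) → Tendsto (fun i => G i q) l (𝓝 (g q)))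
    {θ : ℝ} (hθ : 0 < θ) (hg : ContinuousAt g θ) {θs : ι → ℝ} (hθs : Tendsto θs l (𝓝 θ)) :
    Tendsto (fun i => G i (θs i)) l (𝓝 (g θ)) := by
  refine tendsto_order.2 ⟨fun b hb => ?_, fun b hb => ?_⟩
  · obtain ⟨u, v, ⟨hu, hv⟩, hsub⟩ := mem_nhds_iff_exists_Ioo_subset.1
      ((hg.eventually (lt_mem_nhds hb)).and (Ioi_mem_nhds hθ))
    obtain ⟨p, hup, hpθ⟩ := exists_rat_btwn hu
    obtain ⟨hbp, hp⟩ := hsub ⟨hup, hpθ.trans hv⟩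
    filter_upwards [(hq p hp).eventually (lt_mem_nhds hbp), hθs.eventually (lt_mem_nhds hpθ)]
      with i hi hpi
    exact hi.trans_le (hG i hpi.le)
  · obtain ⟨u, v, ⟨hu, hv⟩, hsub⟩ := mem_nhds_iff_exists_Ioo_subset.1
      (hg.eventually (gt_mem_nhds hb))
    obtain ⟨q, hθq, hqv⟩ := exists_rat_btwn hv
    have hbq : g q < b := hsub ⟨hu.trans hθq, hqv⟩
    filter_upwards [(hq q (hθ.trans hθq)).eventually (gt_mem_nhds hbq),
      hθs.eventually (gt_mem_nhds hθq)] with i hi hqi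
    exact (hG i hqi.le).trans_lt hi

theorem exists_tendsto_pow_le_lt_succ_pow {m : ℕ} (hm : m ≠ 0) :
    ∃ κ : ℕ → ℕ, Tendsto κ atTop atTop ∧
      ∀ n, 0 < n → 0 < κ n ∧ κ n ^ m ≤ n ∧ n ≤ (κ n + 1) ^ m := by
  refine ⟨fun n => Nat.findGreatest (fun k => k ^ m ≤ n) n,
    tendsto_atTop_atTop.2 fun K => ⟨K ^ m + K, fun n hn => Nat.le_findGreatest (by omega)
      (by omega)⟩, fun n hn => ⟨Nat.le_findGreatest hn (show 1 ^ m ≤ n by rwa [one_pow]),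
      Nat.findGreatest_spec (P := fun k => k ^ m ≤ n) hn (show 1 ^ m ≤ n by rwa [one_pow]), ?_⟩⟩
  by_cases hkn : Nat.findGreatest (fun k => k ^ m ≤ n) n + 1 ≤ n
  · exact (not_le.mp (Nat.findGreatest_is_greatest (P := fun k => k ^ m ≤ n)
      (Nat.lt_succ_self _) hkn)).le
  · exact (not_le.mp hkn).le.trans (Nat.le_self_pow hm _)

theorem tendsto_scaledLaplaceSum_of_tendsto_pow {a : ℕ → ℝ} (ha : ∀ i, 0 ≤ a i) {β γ : ℝ}
    (hβ : 0 ≤ β) (hγ : 0 ≤ γ) {m : ℕ} (hm : m ≠ 0) {g : ℝ → ℝ}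
    (h : ∀ q : ℚ, 0 < (q : ℝ) →
      Tendsto (fun k => scaledLaplaceSum a β γ (k ^ m) q) atTop (𝓝 (g q)))
    {θ : ℝ} (hθ : 0 < θ) (hg : ContinuousAt g θ) :
    Tendsto (fun n => scaledLaplaceSum a β γ n θ) atTop (𝓝 (g θ)) := by
  have hrescaled {N : ℕ → ℕ} {c : ℕ → ℝ} (hN : Tendsto N atTop atTop)
      (hc : Tendsto c atTop (𝓝 1)) :
      Tendsto (fun k => c k ^ β * scaledLaplaceSum a β γ (N k ^ m) (θ * c k ^ γ)) atTop
        (𝓝 (g θ)) := by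
    have hθc : Tendsto (fun k => θ * c k ^ γ) atTop (𝓝 θ) := by
      simpa using (hc.rpow_const (Or.inl one_ne_zero)).const_mul θ
    simpa using (hc.rpow_const (Or.inl one_ne_zero)).mul
      (tendsto_apply_of_monotone_of_tendsto_rat (fun k => scaledLaplaceSum_monotone ha β γ _)
        (fun q hq => (h q hq).comp hN) hθ hg hθc)
  have hratio : Tendsto (fun k : ℕ => ((k ^ m : ℕ) : ℝ) / ((k + 1) ^ m : ℕ)) atTop (𝓝 1) := by
    simpa [div_pow] using (tendsto_natCast_div_add_atTop (𝕜 := ℝ) 1).pow m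
  obtain ⟨κ, hκ, hκn⟩ := exists_tendsto_pow_le_lt_succ_pow hm
  -- squeeze the value at `n` between the rescaled values at `κ n ^ m ≤ n ≤ (κ n + 1) ^ m`
  refine tendsto_of_tendsto_of_tendsto_of_le_of_le' (hrescaled hκ (hratio.comp hκ))
    (hrescaled (tendsto_add_atTop_nat 1 |>.comp hκ)
      (by simpa only [inv_div, inv_one] using (hratio.inv₀ one_ne_zero).comp hκ))
    (eventually_atTop.2 ⟨1, fun n hn => ?_⟩) (eventually_atTop.2 ⟨1, fun n hn => ?_⟩)
  all_goals
    obtain ⟨hκ0, hκle, hleκ⟩ := hκn n hn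
  · exact le_scaledLaplaceSum ha hβ hγ hθ.le (pow_pos hκ0 m) hκle hleκ
  · exact scaledLaplaceSum_le ha hβ hγ hθ.le (pow_pos hκ0 m) hκle hleκ

theorem variance_sum_le_sum_integral {Ω ι : Type*} [MeasurableSpace Ω] {μ : Measure Ω}
    [IsProbabilityMeasure μ] {X : ι → Ω → ℝ} {s : Finset ι} (hX : ∀ i ∈ s, AEMeasurable (X i) μ)
    (hX01 : ∀ i ∈ s, ∀ᵐ ω ∂μ, X i ω ∈ Icc 0 1)
    (hind : Set.Pairwise s fun i j => IndepFun (X i) (X j) μ) :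
    variance (∑ i ∈ s, X i) μ ≤ ∑ i ∈ s, μ[X i] := by
  rw [IndepFun.variance_sum (fun i hi => memLp_of_bounded (hX01 i hi)
    (hX i hi).aestronglyMeasurable 2) hind]
  refine Finset.sum_le_sum fun i hi => ?_
  have hmean : 0 ≤ μ[X i] := integral_nonneg_of_ae ((hX01 i hi).mono fun ω hω => hω.1)
  calc variance (X i) μ ≤ (1 - μ[X i]) * (μ[X i] - 0) :=
        variance_le_sub_mul_sub (hX01 i hi) (hX i hi)
    _ ≤ μ[X i] := by nlinarith

theorem ae_tendsto_sub_integral_div_of_summable {Ω : Type*} [MeasurableSpace Ω] {μ : Measure Ω}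
    [IsFiniteMeasure μ] {S : ℕ → Ω → ℝ} (hS : ∀ k, MemLp (S k) 2 μ) {b : ℕ → ℝ}
    (hb : ∀ k, 0 < b k) (hsum : Summable fun k => variance (S k) μ / b k ^ 2) :
    ∀ᵐ ω ∂μ, Tendsto (fun k => (S k ω - μ[S k]) / b k) atTop (𝓝 0) := by
  have hdev (j : ℕ) : ∀ᵐ ω ∂μ, ∀ᶠ k in atTop, |S k ω - μ[S k]| < b k / (j + 1) := by
    have hcheb (k : ℕ) : μ {ω | b k / (j + 1) ≤ |S k ω - μ[S k]|} ≤
        ENNReal.ofReal ((j + 1) ^ 2 * (variance (S k) μ / b k ^ 2)) := by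
      refine (meas_ge_le_variance_div_sq (hS k) (div_pos (hb k) j.cast_add_one_pos)).trans
        (le_of_eq (congrArg ENNReal.ofReal ?_))
      field_simp
    refine (ae_eventually_notMem (ne_top_of_le_ne_top ?_ (ENNReal.tsum_le_tsum hcheb))).mono
      fun ω hω => hω.mono fun k hk => not_le.mp hk
    rw [← ENNReal.ofReal_tsum_of_nonneg (fun k => by have := variance_nonneg (S k) μ; positivity)
      (hsum.mul_left _)]
    exact ENNReal.ofReal_ne_top
  filter_upwards [ae_all_iff.2 hdev] with ω hω
  refine Metric.tendsto_atTop.2 fun ε hε => ?_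
  obtain ⟨j, hj⟩ := exists_nat_one_div_lt hε
  obtain ⟨K, hK⟩ := eventually_atTop.1 (hω j)
  refine ⟨K, fun k hk => ?_⟩
  rw [Real.dist_eq, sub_zero, abs_div, abs_of_pos (hb k), div_lt_iff₀ (hb k)]
  calc |S k ω - μ[S k]| < b k / (j + 1) := hK k hk
    _ = 1 / (j + 1) * b k := by ring
    _ ≤ ε * b k := by gcongr; exact (hb k).le

theorem ae_tendsto_div_of_variance_le_integral {Ω : Type*} [MeasurableSpace Ω]
    {μ : Measure Ω} [IsFiniteMeasure μ] {S : ℕ → Ω → ℝ} (hS : ∀ k, MemLp (S k) 2 μ)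
    (hvar : ∀ k, variance (S k) μ ≤ μ[S k]) {b : ℕ → ℝ} (hb : ∀ k, 0 < b k)
    (hsum : Summable fun k => (b k)⁻¹) {c : ℝ}
    (hmean : Tendsto (fun k => μ[S k] / b k) atTop (𝓝 c)) :
    ∀ᵐ ω ∂μ, Tendsto (fun k => S k ω / b k) atTop (𝓝 c) := by
  obtain ⟨B, hB⟩ := hmean.bddAbove_range
  have hsum' : Summable fun k => variance (S k) μ / b k ^ 2 := by
    refine (hsum.mul_left B).of_nonneg_of_le
      (fun k => div_nonneg (variance_nonneg _ _) (sq_nonneg _)) fun k => ?_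
    calc variance (S k) μ / b k ^ 2 ≤ μ[S k] / b k ^ 2 := by gcongr; exact hvar k
      _ = μ[S k] / b k * (b k)⁻¹ := by field_simp
      _ ≤ B * (b k)⁻¹ := by gcongr; exacts [(inv_pos.2 (hb k)).le, hB ⟨k, rfl⟩]
  filter_upwards [ae_tendsto_sub_integral_div_of_summable hS hb hsum'] with ω hω
  simpa [sub_div] using hω.add hmean

section IndependentSummands

variable {Ω : Type*} [MeasurableSpace Ω] {μ : Measure Ω} [IsProbabilityMeasure μ]
  {τ : Ω → ℝ} {τs : ℕ → Ω → ℝ}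

theorem integral_laplaceSum (hτs0 : ∀ i, 0 ≤ᵐ[μ] τs i) (hident : ∀ i, IdentDistrib (τs i) τ μ μ)
    (n : ℕ) {s : ℝ} (hs : 0 ≤ s) :
    ∫ ω, laplaceSum (fun i => τs i ω) n s ∂μ = n * ∫ ω, (1 - exp (-(s * τ ω))) ∂μ := by
  have hg : Measurable fun x => 1 - exp (-(s * x)) := by fun_prop
  have hmean (i : ℕ) : ∫ ω, 1 - exp (-(s * τs i ω)) ∂μ = ∫ ω, 1 - exp (-(s * τ ω)) ∂μ :=
    ((hident i).comp hg).integral_eq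
  have hint (i : ℕ) : Integrable (fun ω => 1 - exp (-(s * τs i ω))) μ :=
    (memLp_of_bounded ((hτs0 i).mono fun ω hω => one_sub_exp_neg_mul_mem_Icc hs hω)
      (hg.comp_aemeasurable (hident i).aemeasurable_fst).aestronglyMeasurable 1).integrable le_rfl
  simp only [laplaceSum]
  rw [integral_finsetSum _ fun i _ => hint i, Finset.sum_congr rfl fun i _ => hmean i]
  simp

theorem variance_laplaceSum_le_integral (hτs : ∀ i, AEMeasurable (τs i) μ)
    (hτs0 : ∀ i, 0 ≤ᵐ[μ] τs i) (hind : iIndepFun τs μ) (n : ℕ) {s : ℝ} (hs : 0 ≤ s) :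
    variance (fun ω => laplaceSum (fun i => τs i ω) n s) μ ≤
      ∫ ω, laplaceSum (fun i => τs i ω) n s ∂μ := by
  have hg : Measurable fun x => 1 - exp (-(s * x)) := by fun_prop
  have hbd (i : ℕ) : ∀ᵐ ω ∂μ, 1 - exp (-(s * τs i ω)) ∈ Icc 0 1 :=
    (hτs0 i).mono fun ω hω => one_sub_exp_neg_mul_mem_Icc hs hω
  calc variance (fun ω => laplaceSum (fun i => τs i ω) n s) μ
      = variance (∑ i ∈ Finset.Icc 1 n, fun ω => 1 - exp (-(s * τs i ω))) μ := by
        rw [Finset.sum_fn]; rfl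
    _ ≤ ∑ i ∈ Finset.Icc 1 n, ∫ ω, 1 - exp (-(s * τs i ω)) ∂μ :=
        variance_sum_le_sum_integral (fun i _ => hg.comp_aemeasurable (hτs i)) (fun i _ => hbd i)
          fun i _ j _ hij => (hind.indepFun hij).comp hg hg
    _ = ∫ ω, laplaceSum (fun i => τs i ω) n s ∂μ :=
        (integral_finsetSum _ fun i _ => (memLp_of_bounded (hbd i)
          (hg.comp_aemeasurable (hτs i)).aestronglyMeasurable 1).integrable le_rfl).symm

end IndependentSummands

theorem ae_tendsto_scaledLaplaceSum_of_summable {Ω : Type*} [MeasurableSpace Ω]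
    {μ : Measure Ω} [IsProbabilityMeasure μ] {α ν : ℝ} (hα0 : 0 < α) (hα1 : α < 1) (hν : 0 < ν)
    {τ : Ω → ℝ} (hτ0 : 0 ≤ᵐ[μ] τ)
    (htail : Tendsto (fun t => t ^ α * (μ {ω | t < τ ω}).toReal) atTop (𝓝 1))
    {τs : ℕ → Ω → ℝ} (hind : iIndepFun τs μ) (hident : ∀ i, IdentDistrib (τs i) τ μ μ)
    {N : ℕ → ℕ} (hN0 : ∀ k, 0 < N k) (hN : Tendsto N atTop atTop)
    (hsum : Summable fun k => (N k : ℝ) ^ (-(1 - ν))) {q : ℝ} (hq : 0 < q) :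
    ∀ᵐ ω ∂μ, Tendsto (fun k => scaledLaplaceSum (fun i => τs i ω) (1 - ν) (ν / α) (N k) q)
      atTop (𝓝 (Gamma (1 - α) * q ^ α)) := by
  set lam : ℕ → ℝ := fun k => q / (N k : ℝ) ^ (ν / α)
  set L : ℕ → Ω → ℝ := fun k ω => laplaceSum (fun i => τs i ω) (N k) (lam k)
  have hτs (i : ℕ) : AEMeasurable (τs i) μ := (hident i).aemeasurable_fst
  have hτs0 (i : ℕ) : 0 ≤ᵐ[μ] τs i := (hident i).symm.ae_snd measurableSet_Ici hτ0
  have hlam0 (k : ℕ) : 0 ≤ lam k := by positivity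
  have hNpos (k : ℕ) : (0 : ℝ) < N k := Nat.cast_pos.mpr (hN0 k)
  have hL (k : ℕ) : MemLp (L k) 2 μ :=
    memLp_of_bounded ((ae_all_iff.2 hτs0).mono fun ω hω => laplaceSum_mem_Icc hω _ (hlam0 k))
      (by simp only [L, laplaceSum]; fun_prop : AEMeasurable (L k) μ).aestronglyMeasurable 2
  have hmean : Tendsto (fun k => μ[L k] / (N k : ℝ) ^ (1 - ν)) atTop
      (𝓝 (Gamma (1 - α) * q ^ α)) := by
    refine ((tendsto_rpow_mul_comp_div_rpow hα0 hν
      (tendsto_rpow_neg_mul_integral_one_sub_exp_neg_mul hα0.le hα1 (hident 0).aemeasurable_snd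
        hτ0 htail) hq).comp (tendsto_natCast_atTop_atTop.comp hN)).congr fun k => ?_
    have hNν : (N k : ℝ) / (N k : ℝ) ^ (1 - ν) = (N k : ℝ) ^ ν := by
      rw [div_eq_iff (rpow_pos_of_pos (hNpos k) _).ne', ← rpow_add (hNpos k), add_sub_cancel,
        rpow_one]
    rw [integral_laplaceSum hτs0 hident _ (hlam0 k), mul_div_right_comm, hNν]
    rfl
  filter_upwards [ae_tendsto_div_of_variance_le_integral hL
    (fun k => variance_laplaceSum_le_integral hτs hτs0 hind _ (hlam0 k))
    (fun k => rpow_pos_of_pos (hNpos k) _)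
    (hsum.congr fun k => rpow_neg (hNpos k).le _) hmean] with ω hω
  exact hω.congr fun k => by rw [scaledLaplaceSum, rpow_neg (hNpos k).le, inv_mul_eq_div]

theorem tendsto_rpow_mul_measure_lt_of_eq_ofReal {Ω : Type*} [MeasurableSpace Ω]
    {μ : Measure Ω} {τ : Ω → ℝ} {α : ℝ} {Lf : ℝ → ℝ} (hLf : Tendsto Lf atTop (𝓝 1))
    (htail : ∀ t : ℝ, 0 < t → μ {ω | t < τ ω} = ENNReal.ofReal (Lf t / t ^ α)) :
    Tendsto (fun t => t ^ α * (μ {ω | t < τ ω}).toReal) atTop (𝓝 1) := by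
  refine hLf.congr' ?_
  filter_upwards [hLf.eventually (eventually_ge_nhds zero_lt_one), eventually_gt_atTop 0]
    with t hLt ht
  rw [htail t ht, ENNReal.toReal_ofReal (by positivity), mul_div_cancel₀ _ (by positivity)]

theorem exists_ne_zero_summable_pow_rpow_neg {p : ℝ} (hp : 0 < p) :
    ∃ m : ℕ, m ≠ 0 ∧ Summable fun k : ℕ => (((k + 1) ^ m : ℕ) : ℝ) ^ (-p) := by
  obtain ⟨m, hm⟩ := exists_nat_gt p⁻¹
  rw [inv_lt_iff_one_lt_mul₀ hp] at hm
  refine ⟨m, by rintro rfl; norm_num at hm, ((summable_nat_add_iff 1).2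
    (Real.summable_nat_rpow.2 (by linarith : -(m * p) < -1))).congr fun k => ?_⟩
  rw [Nat.cast_pow, ← rpow_natCast, ← rpow_mul (by positivity)]
  push_cast
  ring_nf

theorem laplace_exponent_tendsto_stable_general
    {Ω : Type*} [MeasureSpace Ω] [IsProbabilityMeasure (ℙ : Measure Ω)]
    (α : ℝ) (hα : α ∈ Set.Ioo (0 : ℝ) 1) (ν : ℝ) (hν : ν ∈ Set.Ioo (0 : ℝ) 1)
    (τ : Ω → ℝ) (hτnn : ∀ ω, 0 ≤ τ ω)
    (Lf : ℝ → ℝ) (hLf : Filter.Tendsto Lf Filter.atTop (nhds 1))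
    (htail : ∀ t : ℝ, 0 < t → ℙ {ω | t < τ ω} = ENNReal.ofReal (Lf t / t ^ α))
    (τs : ℕ → Ω → ℝ)
    (hiid : iIndepFun τs ℙ)
    (hident : ∀ i, IdentDistrib (τs i) τ ℙ ℙ)
    :
    ∀ᵐ ω ∂ℙ, ∀ θ : ℝ, 0 < θ →
      Filter.Tendsto
        (fun n : ℕ =>
          (n : ℝ) ^ (-(1 - ν)) *
            ∑ i ∈ Finset.Icc 1 n, (1 - Real.exp (-(θ * τs i ω / (n : ℝ) ^ (ν / α)))))
        Filter.atTop (nhds (Real.Gamma (1 - α) * θ ^ α)) := by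
  obtain ⟨hα0, hα1⟩ := hα
  obtain ⟨hν0, hν1⟩ := hν
  obtain ⟨m, hm0, hsum⟩ := exists_ne_zero_summable_pow_rpow_neg (sub_pos.2 hν1)
  have hsub : ∀ᵐ ω ∂ℙ, ∀ q : ℚ, 0 < (q : ℝ) → Tendsto
      (fun k => scaledLaplaceSum (fun i => τs i ω) (1 - ν) (ν / α) ((k + 1) ^ m) q) atTop
      (𝓝 (Gamma (1 - α) * q ^ α)) := by
    refine ae_all_iff.2 fun q => ?_
    by_cases hq : 0 < (q : ℝ)
    · exact (ae_tendsto_scaledLaplaceSum_of_summable hα0 hα1 hν0 (ae_of_all _ hτnn)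
        (tendsto_rpow_mul_measure_lt_of_eq_ofReal hLf htail) hiid hident
        (fun k => pow_pos k.succ_pos m) ((tendsto_pow_atTop hm0).comp (tendsto_add_atTop_nat 1))
        hsum hq).mono fun ω h _ => h
    · exact ae_of_all _ fun ω h => absurd h hq
  filter_upwards [hsub, ae_all_iff.2 fun i => (hident i).symm.ae_snd measurableSet_Ici
    (ae_of_all _ hτnn)] with ω hω hω0 θ hθ
  simpa only [scaledLaplaceSum, laplaceSum, div_mul_eq_mul_div] using
    tendsto_scaledLaplaceSum_of_tendsto_pow (g := fun x => Gamma (1 - α) * x ^ α) hω0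
      (by linarith) (by positivity) hm0 (fun q hq => (tendsto_add_atTop_iff_nat 1).1 (hω q hq))
      hθ (continuousAt_const.mul (continuousAt_rpow_const _ _ (Or.inl hθ.ne')))

/-- Almost surely, for every `θ > 0`,
`n^{−(1−ν)} ∑_{i=1}^n (1 − e^{−θτ_i/n^{ν/α}}) → Γ(1−α) θ^α` as `n → ∞`. -/
theorem laplace_exponent_tendsto_stable
    {Ω : Type*} [MeasureSpace Ω] [IsProbabilityMeasure (ℙ : Measure Ω)]
    (α : ℝ) (hα : α ∈ Set.Ioo (0 : ℝ) 1) (ν : ℝ) (hν : ν ∈ Set.Ioo (0 : ℝ) 1)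
    (τ : Ω → ℝ) (hτmeas : Measurable τ) (hτnn : ∀ ω, 0 ≤ τ ω)
    (Lf : ℝ → ℝ) (hLf : Filter.Tendsto Lf Filter.atTop (nhds 1))
    (htail : ∀ t : ℝ, 0 < t → ℙ {ω | t < τ ω} = ENNReal.ofReal (Lf t / t ^ α))
    (τs : ℕ → Ω → ℝ) (hτsmeas : ∀ i, Measurable (τs i))
    (hiid : iIndepFun τs ℙ)
    (hident : ∀ i, IdentDistrib (τs i) τ ℙ ℙ)
    :
    ∀ᵐ ω ∂ℙ, ∀ θ : ℝ, 0 < θ →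
      Filter.Tendsto
        (fun n : ℕ =>
          (n : ℝ) ^ (-(1 - ν)) *
            ∑ i ∈ Finset.Icc 1 n, (1 - Real.exp (-(θ * τs i ω / (n : ℝ) ^ (ν / α)))))
        Filter.atTop (nhds (Real.Gamma (1 - α) * θ ^ α)) :=
  laplace_exponent_tendsto_stable_general α hα ν hν τ hτnn Lf hLf htail τs hiid hident
end

section
/- For every ℓ ≥ 1 and all Borel sets B_1, …, B_{2ℓ} ⊆ ℝ, P(X_{U_1} ∈ B_1, …, X_{U_ℓ} ∈ B_ℓ, X_1 ∈ B_{ℓ+1}, …, X_ℓ ∈ B_{2ℓ}) → Π_{i=1}^{2ℓ} P(X ∈ B_i) as M → ∞. -/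
/-!
Condition on the draw `u = (U_1, …, U_ℓ)`. If the `u_i` are distinct and all exceed `ℓ`, then
`X_{u_1}, …, X_{u_ℓ}, X_1, …, X_ℓ` are `2ℓ` distinct members of the i.i.d. family, independent of
the draw, so on such a good draw the event has conditional probability exactly
`∏ P(X ∈ B_i) ∏ P(X ∈ B'_i)`. There are `(M - ℓ).descFactorial ℓ` good draws out of `M ^ ℓ`
equally likely ones, so the good draws have probability tending to `1`, and the bad ones
contribute at most their vanishing probability.
-/

open MeasureTheory ProbabilityTheory Filter Topology Asymptotics Finset
open scoped ENNReal

theorem card_filter_injective_piFinset {ι β : Type*} [Fintype ι] [DecidableEq ι]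
    [DecidableEq β] (s : Finset β) :
    #{u ∈ Fintype.piFinset fun _ : ι => s | Function.Injective u} =
      (#s).descFactorial (Fintype.card ι) := by
  rw [← Fintype.card_coe s, ← Fintype.card_embedding_eq, ← Fintype.card_coe]
  refine Fintype.card_congr
    { toFun := fun u => ⟨fun i => ⟨u.1 i, ?_⟩, fun i j hij => ?_⟩
      invFun := fun e => ⟨fun i => e i, ?_⟩
      left_inv := fun u => rfl
      right_inv := fun e => rfl }
  · exact Fintype.mem_piFinset.1 (mem_filter.1 u.2).1 i
  · exact (mem_filter.1 u.2).2 (congrArg Subtype.val hij)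
  · exact mem_filter.2 ⟨Fintype.mem_piFinset.2 fun i => (e i).2,
      Subtype.val_injective.comp e.injective⟩

theorem tendsto_descFactorial_sub_div_pow (a k : ℕ) :
    Tendsto (fun n : ℕ => ((n - a).descFactorial k : ℝ) / (n : ℝ) ^ k) atTop (𝓝 1) := by
  rw [← tendsto_add_atTop_iff_nat a]
  have hdesc : Tendsto (fun n : ℕ => (n.descFactorial k : ℝ) / (n : ℝ) ^ k) atTop (𝓝 1) :=
    (isEquivalent_iff_tendsto_one (eventually_ne_atTop 0 |>.mono fun n hn => by positivity)).1
      (isEquivalent_descFactorial k)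
  have hshift : Tendsto (fun n : ℕ => ((n : ℝ) / (n + a)) ^ k) atTop (𝓝 1) := by
    simpa using (tendsto_natCast_div_add_atTop (a : ℝ)).pow k
  have hprod := hdesc.mul hshift
  rw [one_mul] at hprod
  refine hprod.congr' ?_
  filter_upwards [eventually_ne_atTop 0] with n hn
  rw [Nat.add_sub_cancel, div_pow, Nat.cast_add]
  field_simp

theorem ENNReal.tendsto_descFactorial_sub_div_pow (a k : ℕ) :
    Tendsto (fun n : ℕ => ((n - a).descFactorial k : ℝ≥0∞) / (n : ℝ≥0∞) ^ k) atTop (𝓝 1) := by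
  have := ENNReal.tendsto_ofReal (_root_.tendsto_descFactorial_sub_div_pow a k)
  rw [ENNReal.ofReal_one] at this
  refine this.congr' ?_
  filter_upwards [eventually_ne_atTop 0] with n hn
  rw [ENNReal.ofReal_div_of_pos (by positivity), ENNReal.ofReal_pow (by positivity),
    ENNReal.ofReal_natCast, ENNReal.ofReal_natCast]

namespace MeasureTheory

theorem tendsto_measure_of_measure_inter_eq_mul {Ω ι : Type*} [MeasurableSpace Ω]
    {μ : Measure Ω} [IsProbabilityMeasure μ] {l : Filter ι} {A G : ι → Set Ω} {p : ℝ≥0∞}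
    (hG : ∀ i, MeasurableSet (G i)) (hAG : ∀ i, μ (A i ∩ G i) = p * μ (G i))
    (hlim : Tendsto (fun i => μ (G i)) l (𝓝 1)) :
    Tendsto (fun i => μ (A i)) l (𝓝 p) := by
  have hlow : Tendsto (fun i => p * μ (G i)) l (𝓝 p) := by
    simpa using ENNReal.Tendsto.const_mul hlim (Or.inl one_ne_zero)
  have hcompl : Tendsto (fun i => 1 - μ (G i)) l (𝓝 0) := by
    simpa using ENNReal.Tendsto.sub tendsto_const_nhds hlim (Or.inl ENNReal.one_ne_top)
  refine tendsto_of_tendsto_of_tendsto_of_le_of_le hlow (by simpa using hlow.add hcompl)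
    (fun i => (hAG i).symm.trans_le (measure_mono Set.inter_subset_left)) fun i => ?_
  calc μ (A i) ≤ μ (A i ∩ G i) + μ (A i \ G i) := measure_le_inter_add_sdiff _ _ _
    _ ≤ μ (A i ∩ G i) + μ (G i)ᶜ := by gcongr; exact Set.sdiff_subset_compl _ _
    _ = p * μ (G i) + (1 - μ (G i)) := by rw [hAG, prob_compl_eq_one_sub (hG i)]

end MeasureTheory

namespace ProbabilityTheory

variable {Ω : Type*} [MeasurableSpace Ω] {μ : Measure Ω}

theorem IndepFun.measure_setOf_mem_inter_preimage_eq_mul {β γ : Type*} [MeasurableSpace β]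
    [MeasurableSingletonClass β] [MeasurableSpace γ] {V : Ω → β} {Y : Ω → γ}
    (hVY : IndepFun V Y μ) (hV : Measurable V) (hY : Measurable Y) {G : Finset β}
    {S : β → Set γ} {p : ℝ≥0∞} (hS : ∀ u ∈ G, MeasurableSet (S u))
    (hp : ∀ u ∈ G, μ (Y ⁻¹' S u) = p) :
    μ ({ω | Y ω ∈ S (V ω)} ∩ V ⁻¹' G) = p * μ (V ⁻¹' G) := by
  have hfibers : {ω | Y ω ∈ S (V ω)} ∩ V ⁻¹' G = ⋃ u ∈ G, V ⁻¹' {u} ∩ Y ⁻¹' S u := by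
    ext ω
    simp [and_comm]
  rw [hfibers, measure_biUnion_finset
      ((Set.pairwiseDisjoint_fiber V G).mono fun u => Set.inter_subset_left)
      fun u hu => (hV (measurableSet_singleton u)).inter (hY (hS u hu)),
    ← sum_measure_preimage_singleton G fun u _ => hV (measurableSet_singleton u), mul_sum]
  refine sum_congr rfl fun u hu => ?_
  rw [hVY.measure_inter_preimage_eq_mul _ _ (measurableSet_singleton u) (hS u hu), hp u hu,
    mul_comm]

theorem iIndepFun.measure_preimage_eq_card_mul_pow {ι β : Type*} [Fintype ι] [DecidableEq ι]
    [MeasurableSpace β] [MeasurableSingletonClass β] {W : ι → Ω → β} (h : iIndepFun W μ)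
    (hW : ∀ i, Measurable (W i)) {s : Finset β} {q : ℝ≥0∞}
    (hq : ∀ i, ∀ j ∈ s, μ {ω | W i ω = j} = q) {G : Finset (ι → β)}
    (hGs : G ⊆ Fintype.piFinset fun _ => s) :
    μ ((fun ω i => W i ω) ⁻¹' G) = #G * q ^ Fintype.card ι := by
  have hfiber : ∀ u ∈ G, μ ((fun ω i => W i ω) ⁻¹' {u}) = q ^ Fintype.card ι := by
    intro u hu
    have hcoord : (fun ω i => W i ω) ⁻¹' {u} = ⋂ i ∈ (univ : Finset ι), W i ⁻¹' {u i} := by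
      ext ω
      simp [funext_iff]
    rw [hcoord, h.measure_inter_preimage_eq_mul univ fun i _ => measurableSet_singleton (u i),
      ← card_univ]
    exact prod_eq_pow_card fun i _ => hq i (u i) (Fintype.mem_piFinset.1 (hGs hu) i)
  rw [← sum_measure_preimage_singleton G
      fun u _ => measurable_pi_lambda _ hW (measurableSet_singleton u),
    sum_congr rfl hfiber, sum_const, nsmul_eq_mul]

theorem tendsto_measure_injective_Ioc_of_uniform [IsProbabilityMeasure μ] {ι : Type*} [Fintype ι]
    [DecidableEq ι] {W : ℕ → ι → Ω → ℕ} (h : ∀ M, iIndepFun (W M) μ)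
    (hW : ∀ M i, Measurable (W M i))
    (hunif : ∀ M, 1 ≤ M → ∀ i, ∀ j ∈ Icc 1 M, μ {ω | W M i ω = j} = (M : ℝ≥0∞)⁻¹) (a : ℕ) :
    Tendsto (fun M => μ ((fun ω i => W M i ω) ⁻¹'
      ↑({u ∈ Fintype.piFinset fun _ => Ioc a M | Function.Injective u} : Finset (ι → ℕ))))
      atTop (𝓝 1) := by
  refine (ENNReal.tendsto_descFactorial_sub_div_pow a (Fintype.card ι)).congr' ?_
  filter_upwards [eventually_ge_atTop 1] with M hM
  symm
  have hsub : Ioc a M ⊆ Icc 1 M := fun j hj => by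
    simp only [mem_Ioc, mem_Icc] at hj ⊢
    omega
  rw [(h M).measure_preimage_eq_card_mul_pow (hW M) (hunif M hM)
      ((filter_subset _ _).trans (Fintype.piFinset_subset _ _ fun _ => hsub)),
    card_filter_injective_piFinset, Nat.card_Ioc, ← ENNReal.inv_pow, div_eq_mul_inv]

theorem iIndepFun.measure_iInter_preimage_eq_prod {ι κ β : Type*} [Fintype ι]
    [MeasurableSpace β] {Xs : κ → Ω → β} {X : Ω → β} (h : iIndepFun Xs μ)
    (hident : ∀ k, IdentDistrib (Xs k) X μ μ) {g : ι → κ} (hg : Function.Injective g)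
    {B : ι → Set β} (hB : ∀ i, MeasurableSet (B i)) :
    μ (⋂ i, Xs (g i) ⁻¹' B i) = ∏ i, μ (X ⁻¹' B i) := by
  have := (h.precomp hg).measure_inter_preimage_eq_mul univ (sets := B) fun i _ => hB i
  simp only [mem_univ, Set.iInter_true] at this
  rw [this]
  exact prod_congr rfl fun i _ => (hident (g i)).measure_mem_eq (hB i)

theorem iIndepFun.measure_resampled_and_initial_eq_prod {κ β : Type*} [MeasurableSpace β]
    {Xs : κ → Ω → β} {X : Ω → β} (h : iIndepFun Xs μ) (hident : ∀ k, IdentDistrib (Xs k) X μ μ)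
    (I : Finset κ) {u : I → κ} (hu : Function.Injective u) (hdisj : ∀ i, u i ∉ I)
    {Bu Bx : κ → Set β} (hBu : ∀ k, MeasurableSet (Bu k)) (hBx : ∀ k, MeasurableSet (Bx k)) :
    μ {ω | (∀ i : I, Xs (u i) ω ∈ Bu i) ∧ ∀ i : I, Xs i ω ∈ Bx i} =
      (∏ i ∈ I, μ {ω | X ω ∈ Bu i}) * ∏ i ∈ I, μ {ω | X ω ∈ Bx i} := by
  have hg : Function.Injective (Sum.elim u Subtype.val) :=
    hu.sumElim Subtype.val_injective fun i j hij => hdisj i (hij ▸ j.2)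
  have := h.measure_iInter_preimage_eq_prod hident hg
    (B := Sum.elim (fun i => Bu i) (fun i => Bx i)) (by rintro (i | i) <;> simp [hBu, hBx])
  simp only [Fintype.prod_sum_type, Sum.elim_inl, Sum.elim_inr] at this
  rw [prod_coe_sort I (fun i => μ (X ⁻¹' Bu i)), prod_coe_sort I (fun i => μ (X ⁻¹' Bx i))]
    at this
  refine Eq.trans ?_ this
  congr 1
  ext ω
  simp [Sum.forall]

end ProbabilityTheory

theorem prob_resampled_and_initial_tendsto_prod_general
    {Ω : Type*} [MeasureSpace Ω] [IsProbabilityMeasure (ℙ : Measure Ω)]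
    (X : Ω → ℝ)
    (Xs : ℕ → Ω → ℝ) (hXsmeas : ∀ i, Measurable (Xs i))
    -- the `X_i` are i.i.d. copies of `X`
    (hXiid : iIndepFun Xs ℙ)
    (hXident : ∀ i, IdentDistrib (Xs i) X ℙ ℙ)
    (U : ℕ → ℕ → Ω → ℕ) (hUmeas : ∀ M i, Measurable (U M i))
    -- for each `M ≥ 1`, the `U M i` are uniformly distributed on `{1, …, M}`
    (hUunif : ∀ M : ℕ, 1 ≤ M → ∀ i, ∀ j ∈ Finset.Icc 1 M,
      ℙ {ω | U M i ω = j} = (M : ENNReal)⁻¹)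
    -- for each `M`, the `U M i` are independent among themselves …
    (hUiid : ∀ M, iIndepFun (U M) ℙ)
    -- … and the whole family `(U M i)_i` is independent of the whole family `(X_i)_i`
    (hUX : ∀ M, IndepFun (fun ω (i : ℕ) => U M i ω) (fun ω (i : ℕ) => Xs i ω) ℙ)
    (ℓ : ℕ)
    (Bu Bx : ℕ → Set ℝ)
    (hBu : ∀ i, MeasurableSet (Bu i)) (hBx : ∀ i, MeasurableSet (Bx i)) :
    Filter.Tendsto
      (fun M : ℕ =>
        ℙ {ω | (∀ i ∈ Finset.Icc 1 ℓ, Xs (U M i ω) ω ∈ Bu i)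
             ∧ (∀ i ∈ Finset.Icc 1 ℓ, Xs i ω ∈ Bx i)})
      Filter.atTop
      (nhds ((∏ i ∈ Finset.Icc 1 ℓ, ℙ {ω | X ω ∈ Bu i}) *
             (∏ i ∈ Finset.Icc 1 ℓ, ℙ {ω | X ω ∈ Bx i}))) := by
  set I := Finset.Icc 1 ℓ
  let V : ℕ → Ω → I → ℕ := fun M ω i => U M i ω
  let Y : Ω → ℕ → ℝ := fun ω i => Xs i ω
  let S : (I → ℕ) → Set (ℕ → ℝ) := fun u =>
    {x | (∀ i : I, x (u i) ∈ Bu i) ∧ ∀ i : I, x i ∈ Bx i}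
  let G : ℕ → Finset (I → ℕ) := fun M =>
    {u ∈ Fintype.piFinset fun _ => Ioc ℓ M | Function.Injective u}
  have hV : ∀ M, Measurable (V M) := fun M => measurable_pi_lambda _ (hUmeas M ·)
  have hVY : ∀ M, IndepFun (V M) Y ℙ := fun M =>
    (hUX M).comp (φ := fun (v : ℕ → ℕ) (i : I) => v i) (ψ := id)
      (measurable_pi_lambda _ fun i => measurable_pi_apply _) measurable_id
  have hgood : ∀ M, ∀ u ∈ G M, ℙ (Y ⁻¹' S u) = _ := fun M u hu =>
    hXiid.measure_resampled_and_initial_eq_prod hXident I (mem_filter.1 hu).2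
      (fun i hi => (mem_Icc.1 hi).2.not_gt
        (mem_Ioc.1 (Fintype.mem_piFinset.1 (mem_filter.1 hu).1 i)).1) hBu hBx
  refine Tendsto.congr (f₁ := fun M => ℙ {ω | Y ω ∈ S (V M ω)}) (fun M => by simp [Y, S, V]) ?_
  exact tendsto_measure_of_measure_inter_eq_mul (fun M => hV M (G M).measurableSet)
    (fun M => (hVY M).measure_setOf_mem_inter_preimage_eq_mul (hV M)
      (measurable_pi_lambda _ hXsmeas) (fun u _ => by measurability) (hgood M))
    (tendsto_measure_injective_Ioc_of_uniform (hUiid · |>.precomp Subtype.val_injective)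
      (fun M i => hUmeas M i) (fun M hM i => hUunif M hM i) ℓ)

/-- For every `ℓ ≥ 1` and Borel sets `B_1, …, B_ℓ, B'_1, …, B'_ℓ ⊆ ℝ`,
`P(X_{U_1} ∈ B_1, …, X_{U_ℓ} ∈ B_ℓ, X_1 ∈ B'_1, …, X_ℓ ∈ B'_ℓ) → ∏ᵢ P(X ∈ Bᵢ) ∏ᵢ P(X ∈ B'ᵢ)`
as `M → ∞`. -/
theorem prob_resampled_and_initial_tendsto_prod
    {Ω : Type*} [MeasureSpace Ω] [IsProbabilityMeasure (ℙ : Measure Ω)]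
    (X : Ω → ℝ) (hXmeas : Measurable X)
    (Xs : ℕ → Ω → ℝ) (hXsmeas : ∀ i, Measurable (Xs i))
    -- the `X_i` are i.i.d. copies of `X`
    (hXiid : iIndepFun Xs ℙ)
    (hXident : ∀ i, IdentDistrib (Xs i) X ℙ ℙ)
    (U : ℕ → ℕ → Ω → ℕ) (hUmeas : ∀ M i, Measurable (U M i))
    -- for each `M ≥ 1`, the `U M i` are uniformly distributed on `{1, …, M}`
    (hUunif : ∀ M : ℕ, 1 ≤ M → ∀ i, ∀ j ∈ Finset.Icc 1 M,
      ℙ {ω | U M i ω = j} = (M : ENNReal)⁻¹)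
    (hUrange : ∀ M : ℕ, 1 ≤ M → ∀ i, ∀ᵐ ω ∂ℙ, U M i ω ∈ Finset.Icc 1 M)
    -- for each `M`, the `U M i` are independent among themselves …
    (hUiid : ∀ M, iIndepFun (U M) ℙ)
    -- … and the whole family `(U M i)_i` is independent of the whole family `(X_i)_i`
    (hUX : ∀ M, IndepFun (fun ω (i : ℕ) => U M i ω) (fun ω (i : ℕ) => Xs i ω) ℙ)
    (ℓ : ℕ) (hℓ : 1 ≤ ℓ)
    (Bu Bx : ℕ → Set ℝ)
    (hBu : ∀ i, MeasurableSet (Bu i)) (hBx : ∀ i, MeasurableSet (Bx i)) :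
    Filter.Tendsto
      (fun M : ℕ =>
        ℙ {ω | (∀ i ∈ Finset.Icc 1 ℓ, Xs (U M i ω) ω ∈ Bu i)
             ∧ (∀ i ∈ Finset.Icc 1 ℓ, Xs i ω ∈ Bx i)})
      Filter.atTop
      (nhds ((∏ i ∈ Finset.Icc 1 ℓ, ℙ {ω | X ω ∈ Bu i}) *
             (∏ i ∈ Finset.Icc 1 ℓ, ℙ {ω | X ω ∈ Bx i}))) :=
  prob_resampled_and_initial_tendsto_prod_general X Xs hXsmeas hXiid hXident U hUmeas hUunif hUiid
    hUX ℓ Bu Bx hBu hBx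
end

section
/- Fix ℓ ≥ 1, M > ℓ, and Borel sets B_1, …, B_{2ℓ} ⊆ ℝ. Let A = {X_{U_1} ∈ B_1, …, X_{U_ℓ} ∈ B_ℓ, X_1 ∈ B_{ℓ+1}, …, X_ℓ ∈ B_{2ℓ}}, C = ∩_{i=1}^{ℓ} {U_i > ℓ}, and D = ∩_{1≤i<j≤ℓ} {U_i ≠ U_j}. Then P(A ∩ C ∩ D) = P(C ∩ D) · Π_{i=1}^{2ℓ} P(X ∈ B_i). -/
/-!
Condition on the value `p` of `(U_1, …, U_ℓ)`, which ranges over a countable set. On `C ∩ D` the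
tuple `p` is injective with values above `ℓ`, so the `2ℓ` indices `p_1, …, p_ℓ, 1, …, ℓ` are
distinct. Since `U` is independent of `X`, `P(A ∩ {U = p}) = P(U = p) · P(X_{p_i} ∈ B_i,
X_i ∈ B_{ℓ+i} for all i)`, and by the i.i.d. assumption the last factor is the product
`∏ P(X ∈ B_i)`, which does not depend on `p`. Summing over `p` gives the claim.
-/

open MeasureTheory ProbabilityTheory
open scoped ENNReal

namespace ProbabilityTheory

variable {Ω ι κ β γ : Type*} {mΩ : MeasurableSpace Ω} {μ : Measure Ω} [MeasurableSpace β]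

lemma iIndepFun.measure_forall_comp_mem_eq_prod [Fintype κ] {Xs : ι → Ω → β} {X : Ω → β}
    (hind : iIndepFun Xs μ) (hid : ∀ i, IdentDistrib (Xs i) X μ μ) {g : κ → ι}
    (hg : g.Injective) {B : κ → Set β} (hB : ∀ k, MeasurableSet (B k)) :
    μ {ω | ∀ k, Xs (g k) ω ∈ B k} = ∏ k, μ {ω | X ω ∈ B k} := by
  have := (hind.precomp hg).measure_inter_preimage_eq_mul Finset.univ (sets := B)
    fun k _ => hB k
  convert this using 1
  · congr 1
    ext
    simp
  · exact Finset.prod_congr rfl fun k _ => ((hid (g k)).measure_mem_eq (hB k)).symm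

lemma iIndepFun.measure_forall_mem_and_forall_mem_eq_prod_mul_prod [Fintype κ]
    {Xs : ι → Ω → β} {X : Ω → β}
    (hind : iIndepFun Xs μ) (hid : ∀ i, IdentDistrib (Xs i) X μ μ) {p q : κ → ι}
    (hpq : (Sum.elim p q).Injective) {B B' : κ → Set β} (hB : ∀ k, MeasurableSet (B k))
    (hB' : ∀ k, MeasurableSet (B' k)) :
    μ {ω | (∀ k, Xs (p k) ω ∈ B k) ∧ ∀ k, Xs (q k) ω ∈ B' k}
      = (∏ k, μ {ω | X ω ∈ B k}) * ∏ k, μ {ω | X ω ∈ B' k} := by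
  have := hind.measure_forall_comp_mem_eq_prod hid hpq (B := Sum.elim B B')
    fun k => k.rec hB hB'
  simpa only [Sum.forall, Sum.elim_inl, Sum.elim_inr, Fintype.prod_sum_type] using this

lemma IndepFun.measure_setOf_mem_and_mem_fiber_eq_mul [Countable γ] [MeasurableSpace γ]
    [MeasurableSingletonClass γ] {Y : Ω → γ} {Z : Ω → β} (hYZ : IndepFun Y Z μ)
    (hY : Measurable Y) (hZ : Measurable Z) {G : Set γ} {T : γ → Set β}
    (hT : ∀ c, MeasurableSet (T c)) {r : ℝ≥0∞} (hr : ∀ c ∈ G, μ (Z ⁻¹' T c) = r) :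
    μ {ω | Y ω ∈ G ∧ Z ω ∈ T (Y ω)} = μ (Y ⁻¹' G) * r := by
  have hunion : {ω | Y ω ∈ G ∧ Z ω ∈ T (Y ω)} = ⋃ c ∈ G, Y ⁻¹' {c} ∩ Z ⁻¹' T c := by
    ext
    simp
  have hfiber (c : γ) : MeasurableSet (Y ⁻¹' {c}) := hY (measurableSet_singleton c)
  rw [hunion, measure_biUnion G.to_countable
      ((Set.pairwiseDisjoint_fiber Y G).mono fun _ => Set.inter_subset_left)
      fun c _ => (hfiber c).inter (hZ (hT c)),
    ← tsum_measure_preimage_singleton G.to_countable fun c _ => hfiber c,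
    ← ENNReal.tsum_mul_right]
  refine tsum_congr fun c => ?_
  rw [hYZ.measure_inter_preimage_eq_mul _ _ (measurableSet_singleton _) (hT c), hr c c.2]

end ProbabilityTheory

theorem prob_inter_eq_prob_mul_prod_general
    {Ω : Type*} [MeasureSpace Ω]
    (X : Ω → ℝ)
    (Xs : ℕ → Ω → ℝ) (hXsmeas : ∀ i, Measurable (Xs i))
    -- the `X_i` are i.i.d. copies of `X`
    (hXiid : iIndepFun Xs ℙ)
    (hXident : ∀ i, IdentDistrib (Xs i) X ℙ ℙ)
    (U : ℕ → ℕ → Ω → ℕ) (hUmeas : ∀ M i, Measurable (U M i))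
    -- … and the whole family `(U M i)_i` is independent of the whole family `(X_i)_i`
    (hUX : ∀ M, IndepFun (fun ω (i : ℕ) => U M i ω) (fun ω (i : ℕ) => Xs i ω) ℙ)
    (ℓ : ℕ) (M : ℕ)
    (Bu Bx : ℕ → Set ℝ)
    (hBu : ∀ i, MeasurableSet (Bu i)) (hBx : ∀ i, MeasurableSet (Bx i)) :
    ℙ ({ω | (∀ i ∈ Finset.Icc 1 ℓ, Xs (U M i ω) ω ∈ Bu i)
          ∧ (∀ i ∈ Finset.Icc 1 ℓ, Xs i ω ∈ Bx i)}
        ∩ {ω | ∀ i ∈ Finset.Icc 1 ℓ, ℓ < U M i ω}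
        ∩ {ω | ∀ i ∈ Finset.Icc 1 ℓ, ∀ j ∈ Finset.Icc 1 ℓ, i ≠ j → U M i ω ≠ U M j ω})
      = ℙ ({ω | ∀ i ∈ Finset.Icc 1 ℓ, ℓ < U M i ω}
          ∩ {ω | ∀ i ∈ Finset.Icc 1 ℓ, ∀ j ∈ Finset.Icc 1 ℓ, i ≠ j → U M i ω ≠ U M j ω}) *
        ((∏ i ∈ Finset.Icc 1 ℓ, ℙ {ω | X ω ∈ Bu i}) *
         (∏ i ∈ Finset.Icc 1 ℓ, ℙ {ω | X ω ∈ Bx i})) := by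
  set S := Finset.Icc 1 ℓ
  let Y : Ω → S → ℕ := fun ω i => U M i ω
  let Z : Ω → ℕ → ℝ := fun ω i => Xs i ω
  let G : Set (S → ℕ) := {p | p.Injective ∧ ∀ i, ℓ < p i}
  let T : (S → ℕ) → Set (ℕ → ℝ) := fun p =>
    {x | (∀ i : S, x (p i) ∈ Bu i) ∧ ∀ i : S, x i ∈ Bx i}
  have hCD : {ω | ∀ i ∈ S, ℓ < U M i ω} ∩ {ω | ∀ i ∈ S, ∀ j ∈ S, i ≠ j → U M i ω ≠ U M j ω}
      = Y ⁻¹' G := by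
    ext ω
    simp [G, Y, Function.Injective, not_imp_not, and_comm]
  have hACD : {ω | (∀ i ∈ S, Xs (U M i ω) ω ∈ Bu i) ∧ ∀ i ∈ S, Xs i ω ∈ Bx i} ∩ Y ⁻¹' G
      = {ω | Y ω ∈ G ∧ Z ω ∈ T (Y ω)} := by
    ext ω
    simp [T, Y, Z, and_comm]
  have hT (p : S → ℕ) : MeasurableSet (T p) := by
    simp only [T, Set.ofPred_and, Set.ofPred_forall]
    exact (MeasurableSet.iInter fun i => measurable_pi_apply (p i) (hBu i)).inter
      (MeasurableSet.iInter fun i => measurable_pi_apply (i : ℕ) (hBx i))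
  have hYZ : IndepFun Y Z ℙ := by
    exact (hUX M).comp (measurable_pi_lambda (fun v (i : S) => v i)
      fun i => measurable_pi_apply _) measurable_id
  rw [Set.inter_assoc, hCD, hACD, hYZ.measure_setOf_mem_and_mem_fiber_eq_mul
    (measurable_pi_lambda _ fun i => hUmeas M i) (measurable_pi_lambda _ hXsmeas) hT]
  rintro p ⟨hinj, hgt⟩
  have hdisj (a b : S) : p a ≠ b := ((Finset.mem_Icc.1 b.2).2.trans_lt (hgt a)).ne'
  rw [← Finset.prod_coe_sort S, ← Finset.prod_coe_sort S]
  exact hXiid.measure_forall_mem_and_forall_mem_eq_prod_mul_prod hXident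
    (hinj.sumElim Subtype.val_injective hdisj) (fun i => hBu i) fun i => hBx i

/-- Fix `ℓ ≥ 1`, `M > ℓ`, and Borel sets `B_1, …, B_ℓ, B'_1, …, B'_ℓ ⊆ ℝ`. With
`A = {X_{U_1} ∈ B_1, …, X_{U_ℓ} ∈ B_ℓ, X_1 ∈ B'_1, …, X_ℓ ∈ B'_ℓ}`,
`C = ∩_{i=1}^ℓ {U_i > ℓ}` and `D = ∩_{1≤i<j≤ℓ} {U_i ≠ U_j}`, one has
`P(A ∩ C ∩ D) = P(C ∩ D) · ∏ᵢ P(X ∈ Bᵢ) ∏ᵢ P(X ∈ B'ᵢ)`. -/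
theorem prob_inter_eq_prob_mul_prod
    {Ω : Type*} [MeasureSpace Ω] [IsProbabilityMeasure (ℙ : Measure Ω)]
    (X : Ω → ℝ) (hXmeas : Measurable X)
    (Xs : ℕ → Ω → ℝ) (hXsmeas : ∀ i, Measurable (Xs i))
    -- the `X_i` are i.i.d. copies of `X`
    (hXiid : iIndepFun Xs ℙ)
    (hXident : ∀ i, IdentDistrib (Xs i) X ℙ ℙ)
    (U : ℕ → ℕ → Ω → ℕ) (hUmeas : ∀ M i, Measurable (U M i))
    -- for each `M ≥ 1`, the `U M i` are uniformly distributed on `{1, …, M}`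
    (hUunif : ∀ M : ℕ, 1 ≤ M → ∀ i, ∀ j ∈ Finset.Icc 1 M,
      ℙ {ω | U M i ω = j} = (M : ENNReal)⁻¹)
    (hUrange : ∀ M : ℕ, 1 ≤ M → ∀ i, ∀ᵐ ω ∂ℙ, U M i ω ∈ Finset.Icc 1 M)
    -- for each `M`, the `U M i` are independent among themselves …
    (hUiid : ∀ M, iIndepFun (U M) ℙ)
    -- … and the whole family `(U M i)_i` is independent of the whole family `(X_i)_i`
    (hUX : ∀ M, IndepFun (fun ω (i : ℕ) => U M i ω) (fun ω (i : ℕ) => Xs i ω) ℙ)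
    (ℓ : ℕ) (hℓ : 1 ≤ ℓ) (M : ℕ) (hM : ℓ < M)
    (Bu Bx : ℕ → Set ℝ)
    (hBu : ∀ i, MeasurableSet (Bu i)) (hBx : ∀ i, MeasurableSet (Bx i)) :
    ℙ ({ω | (∀ i ∈ Finset.Icc 1 ℓ, Xs (U M i ω) ω ∈ Bu i)
          ∧ (∀ i ∈ Finset.Icc 1 ℓ, Xs i ω ∈ Bx i)}
        ∩ {ω | ∀ i ∈ Finset.Icc 1 ℓ, ℓ < U M i ω}
        ∩ {ω | ∀ i ∈ Finset.Icc 1 ℓ, ∀ j ∈ Finset.Icc 1 ℓ, i ≠ j → U M i ω ≠ U M j ω})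
      = ℙ ({ω | ∀ i ∈ Finset.Icc 1 ℓ, ℓ < U M i ω}
          ∩ {ω | ∀ i ∈ Finset.Icc 1 ℓ, ∀ j ∈ Finset.Icc 1 ℓ, i ≠ j → U M i ω ≠ U M j ω}) *
        ((∏ i ∈ Finset.Icc 1 ℓ, ℙ {ω | X ω ∈ Bu i}) *
         (∏ i ∈ Finset.Icc 1 ℓ, ℙ {ω | X ω ∈ Bx i})) :=
  prob_inter_eq_prob_mul_prod_general X Xs hXsmeas hXiid hXident U hUmeas hUX ℓ M Bu Bx hBu hBx
end
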